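/- arXiv:math/0404380 — 7 statements merged into one kernel-verified Lean document; each statement's English description precedes it below -/
import Mathlib

section
/- Let (X,d) be a proper, uniquely geodesic, geodesically complete metric space in which geodesics do not split, and assume that the unique midpoint map m of (X,d) (assigning to x,y the midpoint of the unique geodesic from x to y) is convex. Let I be a surjective isometry of the space C(X,d) of nonempty convex compact subsets of X, endowed with the Hausdorff metric d_H. Then there exists an isometry i of (X,d) onto itself such that I(C) = i(C) (the image of C under i) for all C in C(X,d). -/
open Metric Set TopologicalSpace

variable {X : Type*}

/-- A geodesic segment from `x` to `y`, parametrized by arclength on `[0, dist x y]`. -/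
def IsGeodesicSegment [MetricSpace X] (γ : ℝ → X) (x y : X) : Prop :=
  γ 0 = x ∧ γ (dist x y) = y ∧
    ∀ s ∈ Set.Icc (0 : ℝ) (dist x y), ∀ t ∈ Set.Icc (0 : ℝ) (dist x y),
      dist (γ s) (γ t) = |s - t|

/-- A metric space is geodesic if any two points are joined by a geodesic segment. -/
def IsGeodesicSpace (X : Type*) [MetricSpace X] : Prop :=
  ∀ x y : X, ∃ γ : ℝ → X, IsGeodesicSegment γ x y

/-- A metric space is uniquely geodesic if any two points are joined by a geodesic
segment, which is moreover unique (as a parametrized segment). -/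
def IsUniquelyGeodesic (X : Type*) [MetricSpace X] : Prop :=
  ∀ x y : X, (∃ γ : ℝ → X, IsGeodesicSegment γ x y) ∧
    ∀ γ γ' : ℝ → X, IsGeodesicSegment γ x y → IsGeodesicSegment γ' x y →
      ∀ t ∈ Set.Icc (0 : ℝ) (dist x y), γ t = γ' t

/-- Geodesic completeness: every geodesic segment extends to a full geodesic line,
i.e. an isometric embedding of `ℝ`. -/
def IsGeodesicallyComplete (X : Type*) [MetricSpace X] : Prop :=
  ∀ (x y : X) (γ : ℝ → X), IsGeodesicSegment γ x y →
    ∃ γ' : ℝ → X, Isometry γ' ∧ γ '' Set.Icc (0 : ℝ) (dist x y) ⊆ Set.range γ'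

/-- Geodesics do not split: the image of the bi-infinite geodesic extension of every
nondegenerate geodesic segment is unique. -/
def GeodesicsDoNotSplit (X : Type*) [MetricSpace X] : Prop :=
  ∀ (x y : X) (γ : ℝ → X), IsGeodesicSegment γ x y → x ≠ y →
    ∀ γ₁ γ₂ : ℝ → X, Isometry γ₁ → Isometry γ₂ →
      γ '' Set.Icc (0 : ℝ) (dist x y) ⊆ Set.range γ₁ →
      γ '' Set.Icc (0 : ℝ) (dist x y) ⊆ Set.range γ₂ →
      Set.range γ₁ = Set.range γ₂

/-- A subset is (geodesically) convex if with any two of its points it contains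
the image of every geodesic segment joining them. -/
def IsGeodConvex [MetricSpace X] (C : Set X) : Prop :=
  ∀ a ∈ C, ∀ b ∈ C, ∀ γ : ℝ → X, IsGeodesicSegment γ a b →
    γ '' Set.Icc (0 : ℝ) (dist a b) ⊆ C

/-- A midpoint map on a metric space: a symmetric map `m` with
`d(m(x,y),x) = d(x,y)/2 = d(m(x,y),y)`. -/
def IsMidpointMap [MetricSpace X] (m : X → X → X) : Prop :=
  (∀ x y, m x y = m y x) ∧
    ∀ x y, dist (m x y) x = dist x y / 2 ∧ dist (m x y) y = dist x y / 2

/-- A convex midpoint map: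
`d(m(x₁,y₁), m(x₂,y₂)) ≤ (d(x₁,x₂) + d(y₁,y₂))/2` for all points. -/
def IsConvexMidpointMap [MetricSpace X] (m : X → X → X) : Prop :=
  IsMidpointMap m ∧
    ∀ x₁ x₂ y₁ y₂ : X, dist (m x₁ y₁) (m x₂ y₂) ≤ (dist x₁ x₂ + dist y₁ y₂) / 2

/-- The space `𝒞(X,d)` of nonempty convex compact subsets of `X`, endowed with the
Hausdorff metric (as a subtype of `NonemptyCompacts X`, whose metric is the
Hausdorff distance). -/
abbrev ConvexCompacts (X : Type*) [MetricSpace X] :=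
  {A : NonemptyCompacts X // IsGeodConvex (A : Set X)}

lemma isGeodConvex_singleton [MetricSpace X] (p : X) : IsGeodConvex ({p} : Set X) := by
  rintro a ha b hb γ hγ x ⟨t, ht, rfl⟩
  rw [Set.mem_singleton_iff] at ha hb
  subst ha; subst hb
  rw [dist_self] at ht
  have : t = 0 := le_antisymm ht.2 ht.1
  subst this
  exact hγ.1

/-- The singleton `{p}` as an element of `𝒞(X,d)`. -/
def singletonCC [MetricSpace X] (p : X) : ConvexCompacts X :=
  ⟨⟨⟨{p}, isCompact_singleton⟩, Set.singleton_nonempty p⟩, isGeodConvex_singleton p⟩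

/-- The singleton `{p}` as an element of `𝔉(X,d)`, the space of nonempty compact
subsets of `X` with the Hausdorff metric. -/
def singletonNC [MetricSpace X] (p : X) : NonemptyCompacts X :=
  ⟨⟨{p}, isCompact_singleton⟩, Set.singleton_nonempty p⟩

/-- The closed `r`-neighborhood `N_r(A) = {x | ∃ a ∈ A, d(a,x) ≤ r}` of a set. -/
def closedNbhd [MetricSpace X] (r : ℝ) (A : Set X) : Set X :=
  {x : X | ∃ a ∈ A, dist a x ≤ r}

/-- A set is `m`-convex if it contains the `m`-midpoint of each pair of its points. -/
def MConvexSet [MetricSpace X] (m : X → X → X) (A : Set X) : Prop :=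
  ∀ a ∈ A, ∀ a' ∈ A, m a a' ∈ A

/-- The `m`-convex hull: the intersection of all closed `m`-convex sets containing `A`. -/
def mConvexHull [MetricSpace X] (m : X → X → X) (A : Set X) : Set X :=
  ⋂₀ {C : Set X | IsClosed C ∧ MConvexSet m C ∧ A ⊆ C}

namespace CCAux

open Metric Set

variable {X : Type*} [MetricSpace X]

theorem line_isSeg {L : ℝ → X} (hL : Isometry L) {x y : X} (h0 : L 0 = x)
    (hd : L (dist x y) = y) : IsGeodesicSegment L x y :=
  ⟨h0, hd, fun s _ t _ => by rw [hL.dist_eq, Real.dist_eq]⟩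

theorem exists_line (hug : IsUniquelyGeodesic X) (hgc : IsGeodesicallyComplete X) (x y : X) :
    ∃ L : ℝ → X, Isometry L ∧ L 0 = x ∧ L (dist x y) = y := by
  obtain ⟨γ, hγ⟩ := (hug x y).1
  obtain ⟨γ', hγ', him⟩ := hgc x y γ hγ
  obtain ⟨sx, hsx⟩ : x ∈ range γ' := him ⟨0, ⟨le_refl 0, dist_nonneg⟩, hγ.1⟩
  obtain ⟨sy, hsy⟩ : y ∈ range γ' := him ⟨dist x y, ⟨dist_nonneg, le_refl _⟩, hγ.2.1⟩
  have hdist : |sy - sx| = dist x y := by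
    rw [← Real.dist_eq, ← hγ'.dist_eq, hsx, hsy, dist_comm]
  rcases eq_or_ne (dist x y) 0 with hD | hD
  · have hxy : x = y := dist_eq_zero.mp hD
    refine ⟨fun t => γ' (sx + t), ?_, by simpa using hsx, ?_⟩
    · exact Isometry.of_dist_eq fun a b => by
        rw [hγ'.dist_eq, Real.dist_eq, Real.dist_eq]; ring_nf
    · rw [hD]; simpa using (hxy ▸ hsx)
  · refine ⟨fun t => γ' (sx + (sy - sx) / dist x y * t), ?_, ?_, ?_⟩
    · refine Isometry.of_dist_eq fun a b => by
        rw [hγ'.dist_eq, Real.dist_eq, Real.dist_eq]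
        have : sx + (sy - sx) / dist x y * a - (sx + (sy - sx) / dist x y * b)
            = (sy - sx) / dist x y * (a - b) := by ring
        rw [this, abs_mul, abs_div, hdist, abs_of_nonneg dist_nonneg, div_self hD, one_mul]
    · simpa using hsx
    · show γ' (sx + (sy - sx) / dist x y * dist x y) = y
      rw [mul_comm, ← mul_div_assoc, mul_comm, mul_div_assoc, div_self hD, mul_one]
      simpa using hsy

/-- Any geodesic segment agrees with any line through the same endpoints, on the interval. -/
theorem seg_eq_line (hug : IsUniquelyGeodesic X) {γ L : ℝ → X} {x y : X}
    (hγ : IsGeodesicSegment γ x y) (hL : Isometry L) (h0 : L 0 = x) (hd : L (dist x y) = y)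
    {t : ℝ} (ht : t ∈ Icc (0:ℝ) (dist x y)) : γ t = L t :=
  (hug x y).2 γ L hγ (line_isSeg hL h0 hd) t ht

/-- Two lines through the same (distinct) pair of points agree everywhere. -/
theorem line_unique (hug : IsUniquelyGeodesic X) (hns : GeodesicsDoNotSplit X)
    {L₁ L₂ : ℝ → X} {x y : X} (hxy : x ≠ y)
    (h₁ : Isometry L₁) (h₁0 : L₁ 0 = x) (h₁d : L₁ (dist x y) = y)
    (h₂ : Isometry L₂) (h₂0 : L₂ 0 = x) (h₂d : L₂ (dist x y) = y) :
    ∀ t, L₁ t = L₂ t := by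
  have hD : 0 < dist x y := dist_pos.mpr hxy
  have hagree : ∀ t ∈ Icc (0:ℝ) (dist x y), L₁ t = L₂ t := fun t ht =>
    (hug x y).2 L₁ L₂ (line_isSeg h₁ h₁0 h₁d) (line_isSeg h₂ h₂0 h₂d) t ht
  have hsub₂ : L₁ '' Icc (0:ℝ) (dist x y) ⊆ range L₂ := by
    rintro z ⟨t, ht, rfl⟩; exact ⟨t, (hagree t ht).symm⟩
  have hsub₁ : L₁ '' Icc (0:ℝ) (dist x y) ⊆ range L₁ := image_subset_range _ _
  have hrange : range L₁ = range L₂ :=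
    hns x y L₁ (line_isSeg h₁ h₁0 h₁d) hxy L₁ L₂ h₁ h₂ hsub₁ hsub₂
  intro t
  obtain ⟨u, hu⟩ : L₂ t ∈ range L₁ := hrange ▸ mem_range_self t
  have e1 : |u| = |t| := by
    have h : dist (L₁ 0) (L₁ u) = dist (L₂ 0) (L₂ t) := by rw [h₁0, h₂0, hu]
    rw [h₁.dist_eq, h₂.dist_eq, Real.dist_eq, Real.dist_eq] at h
    simpa [abs_sub_comm] using h
  have e2 : |u - dist x y| = |t - dist x y| := by
    have h : dist (L₁ (dist x y)) (L₁ u) = dist (L₂ (dist x y)) (L₂ t) := by rw [h₁d, h₂d, hu]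
    rw [h₁.dist_eq, h₂.dist_eq, Real.dist_eq, Real.dist_eq] at h
    simpa [abs_sub_comm] using h
  have : u = t := by
    rcases abs_eq_abs.mp e1 with h | h
    · exact h
    · rcases abs_eq_abs.mp e2 with h' | h'
      · linarith [hD]
      · exfalso; nlinarith [hD]
  rw [← hu, this]

end CCAux
namespace CCAux

variable {X : Type*} [MetricSpace X]

open Metric Set

/-- Concatenation of geodesics along an additive triple is a geodesic. -/
theorem concat_isSeg {a b c : X} (habc : dist a b + dist b c = dist a c)
    {γ₁ γ₂ : ℝ → X} (h₁ : IsGeodesicSegment γ₁ a b) (h₂ : IsGeodesicSegment γ₂ b c) :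
    IsGeodesicSegment (fun t => if t ≤ dist a b then γ₁ t else γ₂ (t - dist a b)) a c := by
  set D₁ := dist a b with hD₁
  set D₂ := dist b c with hD₂
  have hD₁0 : 0 ≤ D₁ := dist_nonneg
  have hD₂0 : 0 ≤ D₂ := dist_nonneg
  have hsum : D₁ + D₂ = dist a c := habc
  have key : ∀ s t, s ∈ Icc (0:ℝ) (dist a c) → t ∈ Icc (0:ℝ) (dist a c) → s ≤ t →
      dist ((fun t => if t ≤ D₁ then γ₁ t else γ₂ (t - D₁)) s)
        ((fun t => if t ≤ D₁ then γ₁ t else γ₂ (t - D₁)) t) = t - s := by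
    intro s t hs ht hst
    by_cases hsle : s ≤ D₁ <;> by_cases htle : t ≤ D₁ <;> simp only [if_pos, if_neg, hsle, htle,
      if_true, if_false]
    · rw [h₁.2.2 s ⟨hs.1, hsle⟩ t ⟨ht.1, htle⟩, abs_of_nonpos (by linarith), neg_sub]
    · -- s ≤ D₁ < t
      push_neg at htle
      have htmem : t - D₁ ∈ Icc (0:ℝ) D₂ := ⟨by linarith, by linarith [ht.2]⟩
      have hsb : dist (γ₁ s) b = D₁ - s := by
        have := h₁.2.2 s ⟨hs.1, hsle⟩ D₁ ⟨hD₁0, le_refl _⟩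
        rw [h₁.2.1] at this
        rw [this, abs_of_nonpos (by linarith), neg_sub]
      have hbt : dist b (γ₂ (t - D₁)) = t - D₁ := by
        have := h₂.2.2 0 ⟨le_refl _, hD₂0⟩ (t - D₁) htmem
        rw [h₂.1] at this
        rw [this, abs_of_nonpos (by linarith), neg_sub, sub_zero]
      have hat : dist a (γ₂ (t - D₁)) ≥ D₁ + (t - D₁) := by
        have h1 : dist (γ₂ (t - D₁)) c = D₂ - (t - D₁) := by
          have := h₂.2.2 (t - D₁) htmem D₂ ⟨hD₂0, le_refl _⟩
          rw [h₂.2.1] at this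
          rw [this, abs_of_nonpos (by linarith [ht.2]), neg_sub]
        have h2 : dist a (γ₂ (t - D₁)) + dist (γ₂ (t - D₁)) c ≥ dist a c := dist_triangle a _ c
        rw [h1] at h2
        linarith
      have has : dist a (γ₁ s) = s := by
        have := h₁.2.2 0 ⟨le_refl _, hD₁0⟩ s ⟨hs.1, hsle⟩
        rw [h₁.1] at this
        rw [this, abs_of_nonpos (by linarith [hs.1]), neg_sub, sub_zero]
      have hub : dist (γ₁ s) (γ₂ (t - D₁)) ≤ t - s := by
        calc dist (γ₁ s) (γ₂ (t - D₁)) ≤ dist (γ₁ s) b + dist b (γ₂ (t - D₁)) := dist_triangle _ _ _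
        _ = t - s := by rw [hsb, hbt]; ring
      have hlb : dist (γ₁ s) (γ₂ (t - D₁)) ≥ t - s := by
        have := dist_triangle a (γ₁ s) (γ₂ (t - D₁))
        rw [has] at this
        linarith
      linarith
    · linarith
    · push_neg at hsle
      have hsmem : s - D₁ ∈ Icc (0:ℝ) D₂ := ⟨by linarith, by linarith [hs.2]⟩
      have htmem : t - D₁ ∈ Icc (0:ℝ) D₂ := ⟨by linarith, by linarith [ht.2]⟩
      rw [h₂.2.2 _ hsmem _ htmem, abs_of_nonpos (by linarith), neg_sub]
      ring
  refine ⟨by simpa [hD₁0] using h₁.1, ?_, ?_⟩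
  · by_cases h : dist a c ≤ D₁
    · have : D₂ = 0 := by linarith [(by linarith [dist_triangle a b c] : dist a c ≥ D₁ - D₂)]
      have hbc : b = c := by rwa [hD₂, dist_eq_zero] at this
      have : dist a c = D₁ := by rw [← hsum, this, add_zero]
      rw [this]
      show (if D₁ ≤ D₁ then γ₁ D₁ else γ₂ (D₁ - D₁)) = c
      rw [if_pos (le_refl D₁), ← hbc]
      exact h₁.2.1
    · push_neg at h
      show (if dist a c ≤ D₁ then γ₁ (dist a c) else γ₂ (dist a c - D₁)) = c
      rw [if_neg (not_le.mpr h)]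
      have : dist a c - D₁ = D₂ := by linarith
      rw [this]; exact h₂.2.1
  · intro s hs t ht
    rcases le_total s t with h | h
    · rw [key s t hs ht h, abs_of_nonpos (by linarith), neg_sub]
    · rw [dist_comm, key t s ht hs h, abs_of_nonneg (by linarith)]

/-- If `b` lies metrically between `a` and `c`, every geodesic from `a` to `c` passes
through `b` at parameter `dist a b`. -/
theorem between_mem_seg (hug : IsUniquelyGeodesic X) {a b c : X}
    (habc : dist a b + dist b c = dist a c) {γ : ℝ → X} (hγ : IsGeodesicSegment γ a c) :
    γ (dist a b) = b := by
  obtain ⟨γ₁, h₁⟩ := (hug a b).1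
  obtain ⟨γ₂, h₂⟩ := (hug b c).1
  have hcat := concat_isSeg habc h₁ h₂
  have hmem : dist a b ∈ Icc (0:ℝ) (dist a c) := ⟨dist_nonneg, by
    have := dist_nonneg (x := b) (y := c); linarith⟩
  have := (hug a c).2 γ _ hγ hcat (dist a b) hmem
  rw [this, if_pos (le_refl (dist a b))]
  exact h₁.2.1

/-- Unique extension beyond a point: with `x ≠ y`, there is at most one point `z` at
prescribed additive distances beyond `y` on the ray from `x` through `y`. -/
theorem ext_unique (hug : IsUniquelyGeodesic X) (hgc : IsGeodesicallyComplete X)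
    (hns : GeodesicsDoNotSplit X) {x y z z' : X} (hxy : x ≠ y) {s : ℝ}
    (hz1 : dist x z = dist x y + s) (hz2 : dist y z = s)
    (hz1' : dist x z' = dist x y + s) (hz2' : dist y z' = s) : z = z' := by
  have hs : 0 ≤ s := hz2 ▸ dist_nonneg
  rcases eq_or_lt_of_le hs with h0 | hs
  · have e1 : y = z := dist_eq_zero.mp (by linarith)
    have e2 : y = z' := dist_eq_zero.mp (by linarith)
    rw [← e1, ← e2]
  have hline : ∀ w : X, dist x w = dist x y + s → dist y w = s →
      ∃ L : ℝ → X, Isometry L ∧ L 0 = x ∧ L (dist x y) = y ∧ L (dist x y + s) = w := by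
    intro w hw1 hw2
    obtain ⟨L, hL, hL0, hLd⟩ := exists_line hug hgc x w
    refine ⟨L, hL, hL0, ?_, by rwa [← hw1]⟩
    have : dist x y + dist y w = dist x w := by rw [hw1, hw2]
    exact between_mem_seg hug this (line_isSeg hL hL0 hLd)
  obtain ⟨L, hL, hL0, hLy, hLz⟩ := hline z hz1 hz2
  obtain ⟨L', hL', hL0', hLy', hLz'⟩ := hline z' hz1' hz2'
  have := line_unique hug hns hxy hL hL0 hLy hL' hL0' hLy' (dist x y + s)
  rw [hLz, hLz'] at this
  exact this

end CCAux
namespace CCAux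

variable {X : Type*} [MetricSpace X] {m : X → X → X}

open Metric Set Filter

theorem m_self (hconv : IsConvexMidpointMap m) (x : X) : m x x = x := by
  have h := (hconv.1.2 x x).1
  rw [dist_self, zero_div] at h
  exact dist_eq_zero.mp h

/-- Midpoints along a geodesic segment. -/
theorem m_seg (hmid : ∀ (x y : X) (γ : ℝ → X), IsGeodesicSegment γ x y → m x y = γ (dist x y / 2))
    {γ : ℝ → X} {a b : X} (hγ : IsGeodesicSegment γ a b) {s t : ℝ}
    (hs : s ∈ Icc (0:ℝ) (dist a b)) (ht : t ∈ Icc (0:ℝ) (dist a b)) (hst : s ≤ t) :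
    m (γ s) (γ t) = γ ((s + t) / 2) := by
  have hd : dist (γ s) (γ t) = t - s := by
    rw [hγ.2.2 s hs t ht, abs_of_nonpos (by linarith), neg_sub]
  have hmem : ∀ u ∈ Icc (0:ℝ) (t - s), s + u ∈ Icc (0:ℝ) (dist a b) :=
    fun u hu => ⟨by linarith [hs.1, hu.1], by linarith [ht.2, hu.2]⟩
  have hσ : IsGeodesicSegment (fun u => γ (s + u)) (γ s) (γ t) := by
    refine ⟨by simp, ?_, fun u hu v hv => ?_⟩
    · rw [hd]; congr 1; ring
    · rw [hd] at hu hv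
      rw [hγ.2.2 _ (hmem u hu) _ (hmem v hv)]
      congr 1; ring
  have := hmid (γ s) (γ t) _ hσ
  rw [this, hd]
  congr 1; ring

/-- Midpoints along a line. -/
theorem m_line (hmid : ∀ (x y : X) (γ : ℝ → X), IsGeodesicSegment γ x y → m x y = γ (dist x y / 2))
    {L : ℝ → X} (hL : Isometry L) {s t : ℝ} (hst : s ≤ t) :
    m (L s) (L t) = L ((s + t) / 2) := by
  have hd : dist (L s) (L t) = t - s := by
    rw [hL.dist_eq, Real.dist_eq, abs_of_nonpos (by linarith), neg_sub]
  have hσ : IsGeodesicSegment (fun u => L (s + u)) (L s) (L t) := by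
    refine ⟨by simp, ?_, fun u _ v _ => ?_⟩
    · rw [hd]; congr 1; ring
    · rw [hL.dist_eq, Real.dist_eq]; congr 1; ring
  have := hmid (L s) (L t) _ hσ
  rw [this, hd]
  congr 1; ring

theorem m_mem_convex (hug : IsUniquelyGeodesic X)
    (hmid : ∀ (x y : X) (γ : ℝ → X), IsGeodesicSegment γ x y → m x y = γ (dist x y / 2))
    {S : Set X} (hS : IsGeodConvex S) {a b : X} (ha : a ∈ S) (hb : b ∈ S) : m a b ∈ S := by
  obtain ⟨γ, hγ⟩ := (hug a b).1
  rw [hmid a b γ hγ]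
  exact hS a ha b hb γ hγ ⟨dist a b / 2, ⟨by positivity, by linarith [dist_nonneg (x := a) (y := b)]⟩, rfl⟩

/-- A closed set stable under the midpoint map is geodesically convex. -/
theorem isGeodConvex_of_closed
    (hmid : ∀ (x y : X) (γ : ℝ → X), IsGeodesicSegment γ x y → m x y = γ (dist x y / 2))
    {S : Set X} (hcl : IsClosed S) (hm : ∀ a ∈ S, ∀ b ∈ S, m a b ∈ S) : IsGeodConvex S := by
  intro a ha b hb γ hγ
  rintro _ ⟨t, ht, rfl⟩
  set d := dist a b with hd
  have hd0 : 0 ≤ d := dist_nonneg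
  rcases eq_or_lt_of_le hd0 with h0 | hdpos
  · have : t = 0 := le_antisymm (by rw [← h0] at ht; exact ht.2) ht.1
    rw [this, hγ.1]; exact ha
  have hmemIcc : ∀ (j : ℕ) (n : ℕ), j ≤ 2^n → (j : ℝ) * d / 2^n ∈ Icc (0:ℝ) d := by
    intro j n hj
    constructor
    · positivity
    · rw [div_le_iff₀ (by positivity)]
      have : (j : ℝ) ≤ 2^n := by exact_mod_cast hj
      nlinarith
  have dyadic : ∀ n : ℕ, ∀ k : ℕ, k ≤ 2^n → γ ((k : ℝ) * d / 2^n) ∈ S := by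
    intro n
    induction n with
    | zero =>
      intro k hk
      simp only [pow_zero] at hk
      interval_cases k
      · simpa [hγ.1] using ha
      · simp only [Nat.cast_one, pow_zero, one_mul, div_one]
        rw [hγ.2.1]; exact hb
    | succ n ih =>
      intro k hk
      have hpow : (2:ℕ)^(n+1) = 2 * 2^n := by ring
      rcases Nat.even_or_odd k with ⟨j, hj⟩ | ⟨j, hj⟩
      · have hj' : j ≤ 2^n := by omega
        have e : (k : ℝ) * d / 2^(n+1) = (j : ℝ) * d / 2^n := by
          subst hj; push_cast; ring
        rw [e]; exact ih j hj'
      · have hj1 : j ≤ 2^n := by omega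
        have hj2 : j + 1 ≤ 2^n := by omega
        have h1 := ih j hj1
        have h2' : γ (((j : ℝ) + 1) * d / 2^n) ∈ S := by
          have := ih (j + 1) hj2; push_cast at this; exact this
        have hm2 : ((j : ℝ) + 1) * d / 2^n ∈ Icc (0:ℝ) d := by
          have := hmemIcc (j + 1) n hj2; push_cast at this; exact this
        have hle : (j : ℝ) * d / 2^n ≤ ((j : ℝ) + 1) * d / 2^n := by
          rw [div_le_div_iff₀ (by positivity) (by positivity)]
          nlinarith [hd0, (show (0:ℝ) < 2^n by positivity)]
        have e := m_seg hmid hγ (hmemIcc j n hj1) hm2 hle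
        have e2 : ((j : ℝ) * d / 2^n + ((j : ℝ) + 1) * d / 2^n) / 2 = (k : ℝ) * d / 2^(n+1) := by
          subst hj; push_cast; ring
        have hmm := hm _ h1 _ h2'
        rw [e, e2] at hmm
        exact hmm
  -- approximate t by dyadics
  rcases eq_or_lt_of_le ht.1 with h0 | htpos
  · rw [← h0, hγ.1]; exact ha
  set k : ℕ → ℕ := fun n => ⌊t * 2^n / d⌋₊ with hk
  have hfle : ∀ n, (k n : ℝ) ≤ t * 2^n / d := fun n => Nat.floor_le (by positivity)
  have hflt : ∀ n, t * 2^n / d < (k n : ℝ) + 1 := fun n => Nat.lt_floor_add_one _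
  have hkle : ∀ n, k n ≤ 2^n := by
    intro n
    have h1 : t * 2^n / d ≤ 2^n := by
      rw [div_le_iff₀ hdpos]
      nlinarith [ht.2, (show (0:ℝ) < 2^n by positivity)]
    have : (k n : ℝ) ≤ (2^n : ℕ) := by push_cast; exact le_trans (hfle n) h1
    exact_mod_cast this
  set pts : ℕ → ℝ := fun n => (k n : ℝ) * d / 2^n with hpts
  have hmem : ∀ n, pts n ∈ Icc (0:ℝ) d := fun n => hmemIcc (k n) n (hkle n)
  have hlow : ∀ n, pts n ≤ t := by
    intro n
    have h := hfle n
    rw [le_div_iff₀ hdpos] at h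
    show (k n : ℝ) * d / 2^n ≤ t
    rw [div_le_iff₀ (by positivity)]
    nlinarith
  have hhigh : ∀ n, t - d / 2^n ≤ pts n := by
    intro n
    have := hflt n
    have h2 : t * 2^n < ((k n : ℝ) + 1) * d := by
      rw [div_lt_iff₀ hdpos] at this; linarith
    have h3 : t * 2^n - d < (k n : ℝ) * d := by nlinarith
    show t - d / 2^n ≤ (k n : ℝ) * d / 2^n
    rw [sub_le_iff_le_add, ← add_div, le_div_iff₀ (by positivity : (0:ℝ) < 2^n)]
    nlinarith
  have hdist : ∀ n, dist (γ (pts n)) (γ t) ≤ d / 2^n := by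
    intro n
    rw [hγ.2.2 _ (hmem n) _ ht, abs_of_nonpos (by linarith [hlow n]), neg_sub]
    linarith [hhigh n]
  have htendszero : Tendsto (fun n : ℕ => d / 2^n) atTop (nhds 0) := by
    have h2 : Tendsto (fun n : ℕ => ((1:ℝ)/2)^n) atTop (nhds 0) :=
      tendsto_pow_atTop_nhds_zero_of_lt_one (by norm_num) (by norm_num)
    have : (fun n : ℕ => d / 2^n) = fun n : ℕ => d * ((1:ℝ)/2)^n := by
      funext n; rw [div_pow, one_pow, ← mul_div_assoc, mul_one]
    rw [this]
    simpa using h2.const_mul d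
  have htends : Tendsto (fun n => γ (pts n)) atTop (nhds (γ t)) := by
    rw [tendsto_iff_dist_tendsto_zero]
    exact squeeze_zero (fun n => dist_nonneg) hdist htendszero
  exact hcl.mem_of_tendsto htends (Eventually.of_forall fun n => dyadic n (k n) (hkle n))

end CCAux
namespace CCAux

variable {X : Type*} [MetricSpace X] {m : X → X → X}

open Metric Set

/-- The Busemann-type function of the negative end of a line `L`. -/
noncomputable def bus (L : ℝ → X) (z : X) : ℝ := ⨅ n : ℕ, (dist z (L (-(n:ℝ))) - (n:ℝ))

variable {L : ℝ → X}

theorem line_dist (hL : Isometry L) (s t : ℝ) : dist (L s) (L t) = |s - t| := by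
  rw [hL.dist_eq, Real.dist_eq]

theorem bus_bddBelow (hL : Isometry L) (z : X) :
    BddBelow (range fun n : ℕ => dist z (L (-(n:ℝ))) - (n:ℝ)) := by
  refine ⟨-dist z (L 0), ?_⟩
  rintro _ ⟨n, rfl⟩
  have h1 : dist (L 0) (L (-(n:ℝ))) = n := by
    rw [line_dist hL, zero_sub, abs_neg, abs_neg, abs_of_nonneg (Nat.cast_nonneg n)]
  have htri := dist_triangle (L 0) z (L (-(n:ℝ)))
  simp only [mem_setOf_eq]
  rw [dist_comm (L 0) z] at htri
  linarith

theorem bus_le (hL : Isometry L) (z : X) (n : ℕ) :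
    bus L z ≤ dist z (L (-(n:ℝ))) - (n:ℝ) := ciInf_le (bus_bddBelow hL z) n

theorem le_bus {z : X} {c : ℝ} (h : ∀ n : ℕ, c ≤ dist z (L (-(n:ℝ))) - (n:ℝ)) :
    c ≤ bus L z := le_ciInf h

theorem bus_le_dist (hL : Isometry L) (z : X) : bus L z ≤ dist z (L 0) := by
  have := bus_le hL z 0
  simpa using this

theorem bus_anchor (hL : Isometry L) (z : X) {s : ℝ} (hs : 0 ≤ s) :
    s - bus L z ≤ dist z (L s) := by
  have h : s - dist z (L s) ≤ bus L z := by
    apply le_bus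
    intro n
    have h1 : dist (L s) (L (-(n:ℝ))) = s + n := by
      rw [line_dist hL, sub_neg_eq_add, abs_of_nonneg (by positivity)]
    have htri := dist_triangle (L s) z (L (-(n:ℝ)))
    rw [h1, dist_comm (L s) z] at htri
    linarith
  linarith

theorem bus_line (hL : Isometry L) (s : ℝ) : bus L (L s) = s := by
  apply le_antisymm
  · obtain ⟨n, hn⟩ := exists_nat_ge (-s)
    have h := bus_le hL (L s) n
    rwa [line_dist hL, sub_neg_eq_add, abs_of_nonneg (by linarith), add_sub_cancel_right] at h
  · apply le_bus
    intro n
    rw [line_dist hL, sub_neg_eq_add]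
    have := le_abs_self (s + (n:ℝ))
    linarith

theorem bus_lipschitz (hL : Isometry L) (z w : X) : bus L z ≤ bus L w + dist z w := by
  rw [← sub_le_iff_le_add]
  apply le_bus
  intro n
  have h := bus_le hL z n
  have htri := dist_triangle z w (L (-(n:ℝ)))
  linarith

theorem bus_continuous (hL : Isometry L) : Continuous (bus L) := by
  have hlip : LipschitzWith 1 (bus L) := by
    apply LipschitzWith.of_dist_le_mul
    intro z w
    rw [Real.dist_eq, NNReal.coe_one, one_mul, abs_sub_le_iff]
    constructor
    · linarith [bus_lipschitz hL z w]
    · linarith [bus_lipschitz hL w z, dist_comm z w]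
  exact hlip.continuous

theorem bus_mono (hL : Isometry L) (u : X) {n n' : ℕ} (h : n ≤ n') :
    dist u (L (-(n':ℝ))) - (n':ℝ) ≤ dist u (L (-(n:ℝ))) - (n:ℝ) := by
  have h1 : dist (L (-(n:ℝ))) (L (-(n':ℝ))) = (n':ℝ) - n := by
    rw [line_dist hL]
    rw [show -(n:ℝ) - -(n':ℝ) = (n':ℝ) - n by ring,
      abs_of_nonneg (sub_nonneg.mpr (by exact_mod_cast h))]
  have htri := dist_triangle u (L (-(n:ℝ))) (L (-(n':ℝ)))
  linarith

theorem bus_midpoint (hL : Isometry L) (hconv : IsConvexMidpointMap m) (z w : X) :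
    bus L (m z w) ≤ (bus L z + bus L w) / 2 := by
  apply le_of_forall_pos_le_add
  intro ε hε
  obtain ⟨n₁, hn₁⟩ := exists_lt_of_ciInf_lt (lt_add_of_pos_right (bus L z) hε)
  obtain ⟨n₂, hn₂⟩ := exists_lt_of_ciInf_lt (lt_add_of_pos_right (bus L w) hε)
  set n := max n₁ n₂ with hn
  have t1 : dist z (L (-(n:ℝ))) - (n:ℝ) < bus L z + ε :=
    lt_of_le_of_lt (bus_mono hL z (le_max_left n₁ n₂)) hn₁
  have t2 : dist w (L (-(n:ℝ))) - (n:ℝ) < bus L w + ε :=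
    lt_of_le_of_lt (bus_mono hL w (le_max_right n₁ n₂)) hn₂
  have hm := hconv.2 z (L (-(n:ℝ))) w (L (-(n:ℝ)))
  rw [m_self hconv] at hm
  have hb := bus_le hL (m z w) n
  linarith

theorem bus_exact (hug : IsUniquelyGeodesic X) (hgc : IsGeodesicallyComplete X)
    (hns : GeodesicsDoNotSplit X) (hL : Isometry L) {z : X}
    (h : bus L z = dist z (L 0)) : ∃ s, L s = z := by
  rcases eq_or_ne z (L 0) with hz | hz
  · exact ⟨0, hz.symm⟩
  have hdpw : dist (L 0) (L (-(1:ℝ))) = 1 := by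
    rw [line_dist hL]; norm_num
  have h1 : dist z (L (-(1:ℝ))) = dist z (L 0) + 1 := by
    apply le_antisymm
    · have htri := dist_triangle z (L 0) (L (-(1:ℝ)))
      linarith
    · have hb := bus_le hL z 1
      rw [h] at hb
      push_cast at hb
      linarith
  have hpw : L 0 ≠ L (-(1:ℝ)) := by
    intro e
    rw [e, dist_self] at hdpw
    norm_num at hdpw
  obtain ⟨M, hM, hM0, hMd⟩ := exists_line hug hgc z (L (-(1:ℝ)))
  have hadd : dist z (L 0) + dist (L 0) (L (-(1:ℝ))) = dist z (L (-(1:ℝ))) := by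
    rw [hdpw, h1]
  have hθ : IsGeodesicSegment (fun t => M (dist z (L 0) + t)) (L 0) (L (-(1:ℝ))) := by
    refine ⟨?_, ?_, fun u _ v _ => ?_⟩
    · simpa using between_mem_seg hug hadd (line_isSeg hM hM0 hMd)
    · show M (dist z (L 0) + dist (L 0) (L (-(1:ℝ)))) = L (-(1:ℝ))
      rw [hadd]
      exact hMd
    · rw [hM.dist_eq, Real.dist_eq]; congr 1; ring
  have hLseg : IsGeodesicSegment (fun t => L (-t)) (L 0) (L (-(1:ℝ))) := by
    refine ⟨by simp, ?_, fun u _ v _ => ?_⟩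
    · rw [hdpw]
    · rw [line_dist hL, abs_sub_comm]; congr 1; ring
  have hsubM : (fun t => M (dist z (L 0) + t)) '' Icc (0:ℝ) (dist (L 0) (L (-(1:ℝ)))) ⊆
      range M := by rintro _ ⟨t, _, rfl⟩; exact ⟨_, rfl⟩
  have hsubL : (fun t => M (dist z (L 0) + t)) '' Icc (0:ℝ) (dist (L 0) (L (-(1:ℝ)))) ⊆
      range L := by
    rintro _ ⟨t, ht, rfl⟩
    rw [show (fun t => M (dist z (L 0) + t)) t = (fun t => L (-t)) t from
      (hug (L 0) (L (-(1:ℝ)))).2 _ _ hθ hLseg t ht]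
    exact ⟨-t, rfl⟩
  have hrange := hns (L 0) (L (-(1:ℝ))) _ hθ hpw M L hM hL hsubM hsubL
  have hzM : z ∈ range M := ⟨0, hM0⟩
  rw [hrange] at hzM
  exact hzM

/-- Moving towards the negative end of a line decreases `bus` at unit speed. -/
theorem bus_move (hug : IsUniquelyGeodesic X) (hgc : IsGeodesicallyComplete X)
    [ProperSpace X] (hL : Isometry L) (a : X) {ε : ℝ} (hε : 0 < ε) :
    ∃ w : X, dist a w ≤ ε ∧ bus L w ≤ bus L a - ε := by
  -- construct approximating points
  have key : ∀ η : ℝ, 0 < η → ∃ w : X, dist a w ≤ ε ∧ bus L w ≤ bus L a - ε + η := by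
    intro η hη
    obtain ⟨n₀, hn₀⟩ := exists_lt_of_ciInf_lt (lt_add_of_pos_right (bus L a) hη)
    obtain ⟨n₁, hn₁⟩ := exists_nat_ge (ε + dist a (L 0))
    set n := max n₀ n₁ with hn
    have hterm : dist a (L (-(n:ℝ))) - (n:ℝ) < bus L a + η :=
      lt_of_le_of_lt (bus_mono hL a (le_max_left n₀ n₁)) hn₀
    have hfar : ε ≤ dist a (L (-(n:ℝ))) := by
      have h1 : dist (L 0) (L (-(n:ℝ))) = n := by
        rw [line_dist hL, zero_sub, abs_neg, abs_neg, abs_of_nonneg (Nat.cast_nonneg n)]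
      have htri := dist_triangle (L 0) a (L (-(n:ℝ)))
      have hcast : (n₁ : ℝ) ≤ n := by exact_mod_cast le_max_right n₀ n₁
      rw [dist_comm (L 0) a] at htri
      linarith
    obtain ⟨G, hG, hG0, hGd⟩ := exists_line hug hgc a (L (-(n:ℝ)))
    refine ⟨G ε, ?_, ?_⟩
    · rw [← hG0, hG.dist_eq, Real.dist_eq, zero_sub, abs_neg, abs_of_nonneg hε.le]
    · have hd2 : dist (G ε) (L (-(n:ℝ))) = dist a (L (-(n:ℝ))) - ε := by
        conv_lhs => rw [← hGd]
        rw [hG.dist_eq, Real.dist_eq, abs_of_nonpos (by linarith), neg_sub]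
      have hb := bus_le hL (G ε) n
      rw [hd2] at hb
      linarith
  choose w hw1 hw2 using fun k : ℕ => key (1/((k:ℝ)+1)) (by positivity)
  have hwball : ∀ k, w k ∈ closedBall a ε := fun k => by
    rw [Metric.mem_closedBall, dist_comm]; exact hw1 k
  obtain ⟨w', hmem, φ, hφmono, hφtends⟩ :=
    (isCompact_closedBall a ε).tendsto_subseq hwball
  refine ⟨w', by rw [dist_comm]; exact hmem, ?_⟩
  have htends : Filter.Tendsto (fun k => bus L (w (φ k))) Filter.atTop (nhds (bus L w')) :=
    ((bus_continuous hL).tendsto w').comp hφtends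
  have hub : Filter.Tendsto (fun k : ℕ => bus L a - ε + 1/((φ k : ℝ)+1)) Filter.atTop
      (nhds (bus L a - ε)) := by
    have h1 : Filter.Tendsto (fun k : ℕ => 1/((k : ℝ)+1)) Filter.atTop (nhds 0) :=
      tendsto_one_div_add_atTop_nhds_zero_nat
    have h2 : Filter.Tendsto (fun k : ℕ => 1/((φ k : ℝ)+1)) Filter.atTop (nhds 0) :=
      h1.comp hφmono.tendsto_atTop
    simpa using tendsto_const_nhds.add h2
  exact le_of_tendsto_of_tendsto' htends hub fun k => hw2 (φ k)

end CCAux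
namespace CCAux

variable {X : Type*} [MetricSpace X] {m : X → X → X}

open Metric Set

theorem hedist_ne_top' {S T : Set X} (hS : IsCompact S) (hT : IsCompact T)
    (hSne : S.Nonempty) (hTne : T.Nonempty) : EMetric.hausdorffEdist S T ≠ ⊤ :=
  hausdorffEdist_ne_top_of_nonempty_of_bounded hSne hTne hS.isBounded hT.isBounded

theorem dist_le_hd {S T : Set X} (hS : IsCompact S) (hT : IsCompact T)
    (hSne : S.Nonempty) (hTne : T.Nonempty) {x : X} (hx : x ∈ S) :
    infDist x T ≤ hausdorffDist S T :=
  infDist_le_hausdorffDist_of_mem hx (hedist_ne_top' hS hT hSne hTne)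

theorem exists_close {S T : Set X} (hS : IsCompact S) (hT : IsCompact T)
    (hSne : S.Nonempty) (hTne : T.Nonempty) {x : X} (hx : x ∈ S) :
    ∃ y ∈ T, dist x y ≤ hausdorffDist S T := by
  obtain ⟨y, hy, hxy⟩ := hT.exists_infDist_eq_dist hTne x
  exact ⟨y, hy, by rw [← hxy]; exact dist_le_hd hS hT hSne hTne hx⟩

theorem le_infDist_of {T : Set X} (hT : IsCompact T) (hTne : T.Nonempty) {x : X} {c : ℝ}
    (h : ∀ y ∈ T, c ≤ dist x y) : c ≤ infDist x T := by
  obtain ⟨y, hy, hxy⟩ := hT.exists_infDist_eq_dist hTne x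
  rw [hxy]; exact h y hy

theorem hd_singleton_le {S : Set X} (hSne : S.Nonempty) {x : X} {r : ℝ}
    (hr : ∀ a ∈ S, dist x a ≤ r) : hausdorffDist S {x} ≤ r := by
  obtain ⟨a₀, ha₀⟩ := hSne
  have hr0 : 0 ≤ r := le_trans dist_nonneg (hr a₀ ha₀)
  apply hausdorffDist_le_of_mem_dist hr0
  · intro a ha
    exact ⟨x, rfl, by rw [dist_comm]; exact hr a ha⟩
  · intro y hy
    rw [mem_singleton_iff] at hy
    subst hy
    exact ⟨a₀, ha₀, hr a₀ ha₀⟩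

theorem dist_le_hd_singleton {S : Set X} (hS : IsCompact S) (hSne : S.Nonempty) {x a : X}
    (ha : a ∈ S) : dist x a ≤ hausdorffDist S {x} := by
  have := infDist_le_hausdorffDist_of_mem ha
    (hedist_ne_top' hS isCompact_singleton hSne (singleton_nonempty x))
  rwa [infDist_singleton, dist_comm] at this

theorem exists_farthest {S : Set X} (hS : IsCompact S) (hSne : S.Nonempty) (x : X) :
    ∃ a ∈ S, ∀ b ∈ S, dist x b ≤ dist x a := by
  obtain ⟨a, ha, hmax⟩ := hS.exists_isMaxOn hSne ((continuous_const.dist continuous_id).continuousOn)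
  rw [isMaxOn_iff] at hmax
  exact ⟨a, ha, fun b hb => hmax b hb⟩

theorem hd_singleton_attained {S : Set X} (hS : IsCompact S) (hSne : S.Nonempty) (x : X) :
    ∃ a ∈ S, hausdorffDist S {x} = dist x a := by
  obtain ⟨a, ha, hmax⟩ := exists_farthest hS hSne x
  exact ⟨a, ha, le_antisymm (hd_singleton_le hSne hmax) (dist_le_hd_singleton hS hSne ha)⟩

theorem hd_singleton_singleton (x y : X) : hausdorffDist ({x} : Set X) {y} = dist x y := by
  apply le_antisymm
  · apply hd_singleton_le (singleton_nonempty x)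
    intro a ha
    rw [mem_singleton_iff] at ha
    subst ha
    rw [dist_comm]
  · have := dist_le_hd_singleton (x := y) isCompact_singleton (singleton_nonempty x)
      (rfl : x ∈ ({x} : Set X))
    rwa [dist_comm] at this

theorem mem_closedNbhd_iff {A : Set X} (hA : IsCompact A) (hAne : A.Nonempty) {r : ℝ} {x : X} :
    x ∈ closedNbhd r A ↔ infDist x A ≤ r := by
  constructor
  · rintro ⟨a, ha, h⟩
    exact le_trans (infDist_le_dist_of_mem ha) (by rwa [dist_comm])
  · intro h
    obtain ⟨a, ha, hxa⟩ := hA.exists_infDist_eq_dist hAne x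
    exact ⟨a, ha, by rw [dist_comm, ← hxa]; exact h⟩

theorem closedNbhd_isClosed {A : Set X} (hA : IsCompact A) (hAne : A.Nonempty) (r : ℝ) :
    IsClosed (closedNbhd r A) := by
  have he : closedNbhd r A = (fun x => infDist x A) ⁻¹' Iic r :=
    Set.ext fun x => mem_closedNbhd_iff hA hAne
  rw [he]
  exact IsClosed.preimage (continuous_infDist_pt A) isClosed_Iic

theorem subset_closedNbhd {A : Set X} {r : ℝ} (hr : 0 ≤ r) : A ⊆ closedNbhd r A :=
  fun a ha => ⟨a, ha, by simpa using hr⟩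

theorem closedNbhd_isCompact [ProperSpace X] {A : Set X} (hA : IsCompact A) (hAne : A.Nonempty)
    (r : ℝ) : IsCompact (closedNbhd r A) := by
  apply isCompact_of_isClosed_isBounded (closedNbhd_isClosed hA hAne r)
  obtain ⟨a₀, ha₀⟩ := hAne
  obtain ⟨R, hR⟩ := hA.isBounded.subset_closedBall a₀
  apply Bornology.IsBounded.subset (isBounded_closedBall (x := a₀) (r := R + r))
  rintro z ⟨a, ha, haz⟩
  rw [mem_closedBall]
  have h1 : dist a a₀ ≤ R := by have := hR ha; rwa [mem_closedBall] at this
  calc dist z a₀ ≤ dist z a + dist a a₀ := dist_triangle _ _ _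
  _ ≤ R + r := by rw [dist_comm z a]; linarith

theorem closedNbhd_mstable (hconv : IsConvexMidpointMap m) {A : Set X} {r : ℝ}
    (hA : ∀ a ∈ A, ∀ b ∈ A, m a b ∈ A) :
    ∀ z ∈ closedNbhd r A, ∀ w ∈ closedNbhd r A, m z w ∈ closedNbhd r A := by
  rintro z ⟨a, ha, hza⟩ w ⟨b, hb, hwb⟩
  refine ⟨m a b, hA a ha b hb, ?_⟩
  have := hconv.2 a z b w
  linarith

theorem exists_diam_pair {A : Set X} (hA : IsCompact A) (hAne : A.Nonempty) :
    ∃ p ∈ A, ∃ q ∈ A, ∀ a ∈ A, ∀ b ∈ A, dist a b ≤ dist p q := by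
  have hc : IsCompact (A ×ˢ A) := hA.prod hA
  have hne : (A ×ˢ A).Nonempty := hAne.prod hAne
  obtain ⟨⟨p, q⟩, hpq, hmax⟩ := hc.exists_isMaxOn hne continuous_dist.continuousOn
  rw [isMaxOn_iff] at hmax
  exact ⟨p, hpq.1, q, hpq.2, fun a ha b hb => hmax (a, b) ⟨ha, hb⟩⟩

end CCAux
namespace CCAux

variable {X : Type*} [MetricSpace X] {m : X → X → X}

open Metric Set

theorem distCC (A B : ConvexCompacts X) :
    dist A B = hausdorffDist (A.1 : Set X) (B.1 : Set X) := rfl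

theorem ccext {A B : ConvexCompacts X} (h : (A.1 : Set X) = (B.1 : Set X)) : A = B := by
  apply Subtype.ext
  exact TopologicalSpace.NonemptyCompacts.ext h

/-- A 4-clique of pairwise distance `2r` inside the `r`-ball around `A`. -/
def HasCliqueCC (A : ConvexCompacts X) : Prop :=
  ∃ r : ℝ, 0 < r ∧ ∃ B₁ B₂ B₃ B₄ : ConvexCompacts X,
    dist A B₁ ≤ r ∧ dist A B₂ ≤ r ∧ dist A B₃ ≤ r ∧ dist A B₄ ≤ r ∧
    dist B₁ B₂ = 2*r ∧ dist B₁ B₃ = 2*r ∧ dist B₁ B₄ = 2*r ∧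
    dist B₂ B₃ = 2*r ∧ dist B₂ B₄ = 2*r ∧ dist B₃ B₄ = 2*r

section NoClique

theorem oneSide (hug : IsUniquelyGeodesic X) (hgc : IsGeodesicallyComplete X)
    (hns : GeodesicsDoNotSplit X) {x : X} {r : ℝ} (hr : 0 < r) {S T : Set X} (hTne : T.Nonempty)
    (hSx : ∀ b ∈ S, dist x b ≤ r) (hTx : ∀ b ∈ T, dist x b ≤ r)
    {u : X} (hu : u ∈ S) (hfar : ∀ v ∈ T, 2*r ≤ dist u v) :
    ∃ z, T = {z} ∧ dist x z = r := by
  obtain ⟨v₀, hv₀⟩ := hTne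
  have hxu : dist x u ≤ r := hSx u hu
  have hux : dist u x = r := by
    rw [dist_comm]
    refine le_antisymm hxu ?_
    have h1 := hfar v₀ hv₀
    have h2 := dist_triangle u x v₀
    have h3 := hTx v₀ hv₀
    linarith [dist_comm u x]
  have huxne : u ≠ x := by
    intro e; rw [e, dist_self] at hux; linarith
  have hvals : ∀ v ∈ T, dist u v = dist u x + r ∧ dist x v = r := by
    intro v hv
    have h1 := hfar v hv
    have h2 := dist_triangle u x v
    have h3 := hTx v hv
    have huv : dist u v = 2*r := le_antisymm (by linarith) h1
    exact ⟨by rw [huv, hux]; ring, by linarith⟩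
  refine ⟨v₀, ?_, (hvals v₀ hv₀).2⟩
  apply Set.eq_singleton_iff_unique_mem.mpr
  refine ⟨hv₀, fun v hv => ?_⟩
  exact ext_unique hug hgc hns huxne (hvals v hv).1 (hvals v hv).2
    (hvals v₀ hv₀).1 (hvals v₀ hv₀).2

theorem pair_sing (hug : IsUniquelyGeodesic X) (hgc : IsGeodesicallyComplete X)
    (hns : GeodesicsDoNotSplit X) {x : X} {r : ℝ} (hr : 0 < r) {S T : Set X}
    (hS : IsCompact S) (hT : IsCompact T) (hSne : S.Nonempty) (hTne : T.Nonempty)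
    (hSx : ∀ b ∈ S, dist x b ≤ r) (hTx : ∀ b ∈ T, dist x b ≤ r)
    (hST : hausdorffDist S T = 2*r) :
    (∃ z, S = {z} ∧ dist x z = r) ∨ (∃ z, T = {z} ∧ dist x z = r) := by
  by_cases hcase : ∃ u ∈ S, ∀ v ∈ T, 2*r ≤ dist u v
  · obtain ⟨u, hu, hfar⟩ := hcase
    exact Or.inr (oneSide hug hgc hns hr hTne hSx hTx hu hfar)
  · push_neg at hcase
    have hcase2 : ∃ v ∈ T, ∀ u ∈ S, 2*r ≤ dist v u := by
      by_contra hc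
      push_neg at hc
      obtain ⟨us, husm, hmax1⟩ := hS.exists_isMaxOn hSne (continuous_infDist_pt T).continuousOn
      obtain ⟨vs, hvsm, hmax2⟩ := hT.exists_isMaxOn hTne (continuous_infDist_pt S).continuousOn
      rw [isMaxOn_iff] at hmax1 hmax2
      have hM1 : infDist us T < 2*r := by
        obtain ⟨v, hv, hlt⟩ := hcase us husm
        exact lt_of_le_of_lt (infDist_le_dist_of_mem hv) hlt
      have hM2 : infDist vs S < 2*r := by
        obtain ⟨u, hu, hlt⟩ := hc vs hvsm
        exact lt_of_le_of_lt (infDist_le_dist_of_mem hu) hlt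
      have hle : hausdorffDist S T ≤ max (infDist us T) (infDist vs S) := by
        apply hausdorffDist_le_of_infDist
        · exact le_max_iff.mpr (Or.inl infDist_nonneg)
        · exact fun z hz => le_max_iff.mpr (Or.inl (hmax1 z hz))
        · exact fun z hz => le_max_iff.mpr (Or.inr (hmax2 z hz))
      rw [hST] at hle
      have := max_lt hM1 hM2
      linarith
    obtain ⟨v, hv, hfar⟩ := hcase2
    exact Or.inl (oneSide hug hgc hns hr hSne hTx hSx hv hfar)

theorem three_sing (hug : IsUniquelyGeodesic X) (hgc : IsGeodesicallyComplete X)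
    (hns : GeodesicsDoNotSplit X) {x : X} {r : ℝ} (hr : 0 < r) {b c d : X}
    (hbx : dist x b ≤ r) (hcx : dist x c ≤ r) (hdx : dist x d ≤ r)
    (hbc : dist b c = 2*r) (hbd : dist b d = 2*r) (hcd : dist c d = 2*r) : False := by
  have h1 := dist_triangle b x c
  have h2 := dist_triangle b x d
  have hbxr : dist b x = r := by
    rw [dist_comm]
    refine le_antisymm hbx ?_
    linarith [dist_comm b x]
  have hbxne : b ≠ x := by intro e; rw [e, dist_self] at hbxr; linarith
  have hcxr : dist x c = r := by linarith
  have hdxr : dist x d = r := by linarith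
  have hc' : dist b c = dist b x + r := by rw [hbc, hbxr]; ring
  have hd' : dist b d = dist b x + r := by rw [hbd, hbxr]; ring
  have : c = d := ext_unique hug hgc hns hbxne hc' hcxr hd' hdxr
  rw [this, dist_self] at hcd
  linarith

theorem no_clique_of_singleton (hug : IsUniquelyGeodesic X) (hgc : IsGeodesicallyComplete X)
    (hns : GeodesicsDoNotSplit X) (x : X) (A : ConvexCompacts X)
    (hA : (A.1 : Set X) = {x}) : ¬ HasCliqueCC A := by
  rintro ⟨r, hr, B₁, B₂, B₃, B₄, h1, h2, h3, h4, h12, h13, h14, h23, h24, h34⟩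
  have hball : ∀ B : ConvexCompacts X, dist A B ≤ r → ∀ b ∈ (B.1 : Set X), dist x b ≤ r := by
    intro B hAB b hb
    have h := dist_le_hd_singleton (x := x) B.1.isCompact B.1.nonempty hb
    have he : hausdorffDist (B.1 : Set X) {x} = dist A B := by
      rw [distCC, hA, hausdorffDist_comm]
    rw [he] at h
    exact le_trans h hAB
  have hp : ∀ (S T : ConvexCompacts X), dist A S ≤ r → dist A T ≤ r → dist S T = 2*r →
      (∃ z, (S.1 : Set X) = {z} ∧ dist x z = r) ∨
      (∃ z, (T.1 : Set X) = {z} ∧ dist x z = r) := by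
    intro S T hS hT hST
    exact pair_sing hug hgc hns hr S.1.isCompact T.1.isCompact S.1.nonempty T.1.nonempty
      (hball S hS) (hball T hT) (by rw [← distCC]; exact hST)
  have fin3 : ∀ (P Q R : ConvexCompacts X), dist A P ≤ r → dist A Q ≤ r → dist A R ≤ r →
      dist P Q = 2*r → dist P R = 2*r → dist Q R = 2*r →
      (∃ z, (P.1 : Set X) = {z}) → (∃ z, (Q.1 : Set X) = {z}) → (∃ z, (R.1 : Set X) = {z}) →
      False := by
    rintro P Q R hP hQ hR hPQ hPR hQR ⟨zp, hzp⟩ ⟨zq, hzq⟩ ⟨zr, hzr⟩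
    have e1 : dist zp zq = 2*r := by
      rw [distCC, hzp, hzq, hd_singleton_singleton] at hPQ; exact hPQ
    have e2 : dist zp zr = 2*r := by
      rw [distCC, hzp, hzr, hd_singleton_singleton] at hPR; exact hPR
    have e3 : dist zq zr = 2*r := by
      rw [distCC, hzq, hzr, hd_singleton_singleton] at hQR; exact hQR
    exact three_sing hug hgc hns hr
      (hball P hP zp (by rw [hzp]; rfl))
      (hball Q hQ zq (by rw [hzq]; rfl))
      (hball R hR zr (by rw [hzr]; rfl)) e1 e2 e3
  have s12 := hp B₁ B₂ h1 h2 h12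
  have s34 := hp B₃ B₄ h3 h4 h34
  rcases s12 with ⟨z1, hz1, -⟩ | ⟨z2, hz2, -⟩ <;> rcases s34 with ⟨z3, hz3, -⟩ | ⟨z4, hz4, -⟩
  · rcases hp B₂ B₄ h2 h4 h24 with ⟨w, hw, -⟩ | ⟨w, hw, -⟩
    · exact fin3 B₁ B₂ B₃ h1 h2 h3 h12 h13 h23 ⟨z1, hz1⟩ ⟨w, hw⟩ ⟨z3, hz3⟩
    · exact fin3 B₁ B₃ B₄ h1 h3 h4 h13 h14 h34 ⟨z1, hz1⟩ ⟨z3, hz3⟩ ⟨w, hw⟩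
  · rcases hp B₂ B₃ h2 h3 h23 with ⟨w, hw, -⟩ | ⟨w, hw, -⟩
    · exact fin3 B₁ B₂ B₄ h1 h2 h4 h12 h14 h24 ⟨z1, hz1⟩ ⟨w, hw⟩ ⟨z4, hz4⟩
    · exact fin3 B₁ B₃ B₄ h1 h3 h4 h13 h14 h34 ⟨z1, hz1⟩ ⟨w, hw⟩ ⟨z4, hz4⟩
  · rcases hp B₁ B₄ h1 h4 h14 with ⟨w, hw, -⟩ | ⟨w, hw, -⟩
    · exact fin3 B₁ B₂ B₃ h1 h2 h3 h12 h13 h23 ⟨w, hw⟩ ⟨z2, hz2⟩ ⟨z3, hz3⟩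
    · exact fin3 B₂ B₃ B₄ h2 h3 h4 h23 h24 h34 ⟨z2, hz2⟩ ⟨z3, hz3⟩ ⟨w, hw⟩
  · rcases hp B₁ B₃ h1 h3 h13 with ⟨w, hw, -⟩ | ⟨w, hw, -⟩
    · exact fin3 B₁ B₂ B₄ h1 h2 h4 h12 h14 h24 ⟨w, hw⟩ ⟨z2, hz2⟩ ⟨z4, hz4⟩
    · exact fin3 B₂ B₃ B₄ h2 h3 h4 h23 h24 h34 ⟨z2, hz2⟩ ⟨w, hw⟩ ⟨z4, hz4⟩

end NoClique

end CCAux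
namespace CCAux

variable {X : Type*} [MetricSpace X] {m : X → X → X}

open Metric Set

theorem clique_of_not_singleton [ProperSpace X]
    (hug : IsUniquelyGeodesic X) (hgc : IsGeodesicallyComplete X) (hns : GeodesicsDoNotSplit X)
    (hmid : ∀ (x y : X) (γ : ℝ → X), IsGeodesicSegment γ x y → m x y = γ (dist x y / 2))
    (hconv : IsConvexMidpointMap m)
    (A : ConvexCompacts X) (hA : ¬ ∃ x : X, (A.1 : Set X) = {x}) : HasCliqueCC A := by
  have hAc : IsCompact (A.1 : Set X) := A.1.isCompact
  have hAne : (A.1 : Set X).Nonempty := A.1.nonempty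
  have hAm : ∀ a ∈ (A.1 : Set X), ∀ b ∈ (A.1 : Set X), m a b ∈ (A.1 : Set X) :=
    fun a ha b hb => m_mem_convex hug hmid A.2 ha hb
  obtain ⟨p, hp, q, hq, hdiam⟩ := exists_diam_pair hAc hAne
  set D := dist p q with hD
  have hD0 : 0 < D := by
    rcases lt_or_eq_of_le (dist_nonneg : (0:ℝ) ≤ D) with h | h
    · exact h
    · exfalso
      apply hA
      refine ⟨p, Set.eq_singleton_iff_unique_mem.mpr ⟨hp, fun a ha => ?_⟩⟩
      have h2 := hdiam a ha p hp
      have h3 : D = 0 := by rw [hD, ← h]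
      rw [h3] at h2
      exact dist_le_zero.mp h2
  obtain ⟨L, hL, hL0, hLD⟩ := exists_line hug hgc p q
  rw [← hD] at hLD
  set Lq : ℝ → X := fun t => L (D - t) with hLqdef
  have hLq : Isometry Lq := Isometry.of_dist_eq fun a b => by
    show dist (L (D - a)) (L (D - b)) = dist a b
    rw [hL.dist_eq, Real.dist_eq, Real.dist_eq, abs_sub_comm]
    congr 1; ring
  have hLqval : ∀ t, Lq t = L (D - t) := fun t => rfl
  have hLq0 : Lq 0 = q := by rw [hLqval, sub_zero, hLD]
  have hbusL : ∀ s, bus L (L s) = s := bus_line hL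
  have hbusLq : ∀ s, bus Lq (Lq s) = s := bus_line hLq
  -- sigma max
  have hcont : Continuous (fun a => bus L a + bus Lq a) :=
    (bus_continuous hL).add (bus_continuous hLq)
  obtain ⟨astar, hastar, hmaxσ⟩ := hAc.exists_isMaxOn hAne hcont.continuousOn
  rw [isMaxOn_iff] at hmaxσ
  set Δ := bus L astar + bus Lq astar with hΔdef
  have hbusLle : ∀ a ∈ (A.1 : Set X), bus L a ≤ D := by
    intro a ha
    have h := bus_le_dist hL a
    rw [hL0] at h
    exact le_trans h (hdiam a ha p hp)
  have hbusLqle : ∀ a ∈ (A.1 : Set X), bus Lq a ≤ D := by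
    intro a ha
    have h := bus_le_dist hLq a
    rw [hLq0] at h
    exact le_trans h (hdiam a ha q hq)
  have hΔlt : Δ < 2*D := by
    by_contra hc
    push_neg at hc
    have h1 : bus L astar ≤ D := hbusLle astar hastar
    have h2 : bus Lq astar ≤ D := hbusLqle astar hastar
    have h3 : bus L astar = D := by
      have : bus L astar + bus Lq astar = Δ := rfl
      linarith
    have h5 : bus L astar ≤ dist astar p := by
      have h := bus_le_dist hL astar; rwa [hL0] at h
    have h6 : dist astar p = D := le_antisymm (hdiam astar hastar p hp) (by linarith)
    have heq : bus L astar = dist astar (L 0) := by rw [hL0, h6, h3]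
    obtain ⟨s, hs⟩ := bus_exact hug hgc hns hL heq
    have hsD : s = D := by rw [← hbusL s, hs, h3]
    have hq' : astar = q := by rw [← hs, hsD, hLD]
    have h7 : bus Lq astar = 0 := by rw [hq', ← hLq0, hbusLq]
    have : bus L astar + bus Lq astar = Δ := rfl
    linarith
  -- choice of r
  set r := min (D/4) ((2*D - Δ)/4) with hrdef
  have hr0 : 0 < r := lt_min (by linarith) (by linarith)
  have hr1 : r ≤ D/4 := min_le_left _ _
  have hr2 : r ≤ (2*D - Δ)/4 := min_le_right _ _
  -- special points
  set pr : X := L (-r) with hprdef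
  set qr : X := L (D + r) with hqrdef
  have hqr' : qr = Lq (-r) := by rw [hqrdef, hLqval]; congr 1; ring
  have havoidq : ∀ z, bus L z ≤ D - r → 2*r ≤ dist z qr := by
    intro z hz
    have h := bus_anchor hL z (s := D + r) (by linarith)
    rw [← hqrdef] at h
    linarith
  have havoidp : ∀ z, bus Lq z ≤ D - r → 2*r ≤ dist z pr := by
    intro z hz
    have h := bus_anchor hLq z (s := D + r) (by linarith)
    have e : Lq (D + r) = pr := by rw [hLqval, hprdef]; congr 1; ring
    rw [e] at h
    linarith
  have hprN : pr ∈ closedNbhd r (A.1 : Set X) := by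
    refine ⟨p, hp, ?_⟩
    rw [← hL0, hprdef, hL.dist_eq, Real.dist_eq]
    rw [show (0:ℝ) - -r = r by ring, abs_of_nonneg hr0.le]
  have hqrN : qr ∈ closedNbhd r (A.1 : Set X) := by
    refine ⟨q, hq, ?_⟩
    rw [← hLD, hqrdef, hL.dist_eq, Real.dist_eq]
    rw [show D - (D + r) = -r by ring, abs_neg, abs_of_nonneg hr0.le]
  have hprWp : bus L pr ≤ D - r := by rw [hprdef, hbusL]; linarith
  have hqrWq : bus Lq qr ≤ D - r := by rw [hqr', hbusLq]; linarith
  -- the sets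
  set N := closedNbhd r (A.1 : Set X) with hNdef
  set Wp := {z : X | bus L z ≤ D - r} with hWpdef
  set Wq := {z : X | bus Lq z ≤ D - r} with hWqdef
  have hNc : IsCompact N := closedNbhd_isCompact hAc hAne r
  have hNcl : IsClosed N := closedNbhd_isClosed hAc hAne r
  have hNm : ∀ a ∈ N, ∀ b ∈ N, m a b ∈ N := closedNbhd_mstable hconv hAm
  have hWpcl : IsClosed Wp := isClosed_le (bus_continuous hL) continuous_const
  have hWqcl : IsClosed Wq := isClosed_le (bus_continuous hLq) continuous_const
  have hWpm : ∀ a ∈ Wp, ∀ b ∈ Wp, m a b ∈ Wp := by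
    intro a ha b hb
    have h := bus_midpoint hL hconv a b
    simp only [hWpdef, mem_setOf_eq] at ha hb ⊢
    linarith
  have hWqm : ∀ a ∈ Wq, ∀ b ∈ Wq, m a b ∈ Wq := by
    intro a ha b hb
    have h := bus_midpoint hLq hconv a b
    simp only [hWqdef, mem_setOf_eq] at ha hb ⊢
    linarith
  -- coverage of A by each of the four sets
  have hcov1 : ∀ a ∈ (A.1 : Set X), ∃ w ∈ N, dist a w ≤ r :=
    fun a ha => ⟨a, subset_closedNbhd hr0.le ha, by simp [hr0.le]⟩
  have hcovq : ∀ a ∈ (A.1 : Set X), ∃ w ∈ N ∩ Wq, dist a w ≤ r := by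
    intro a ha
    by_cases hcase : bus Lq a ≤ D - r
    · exact ⟨a, ⟨subset_closedNbhd hr0.le ha, hcase⟩, by simp [hr0.le]⟩
    · push_neg at hcase
      have hε0 : 0 < bus Lq a - (D - r) := by linarith
      have hεr : bus Lq a - (D - r) ≤ r := by linarith [hbusLqle a ha]
      obtain ⟨w, hw1, hw2⟩ := bus_move hug hgc hLq a hε0
      exact ⟨w, ⟨⟨a, ha, hw1.trans hεr⟩, by
        simp only [hWqdef, mem_setOf_eq]; linarith⟩, hw1.trans hεr⟩
  have hcovp : ∀ a ∈ (A.1 : Set X), ∃ w ∈ N ∩ Wp, dist a w ≤ r := by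
    intro a ha
    by_cases hcase : bus L a ≤ D - r
    · exact ⟨a, ⟨subset_closedNbhd hr0.le ha, hcase⟩, by simp [hr0.le]⟩
    · push_neg at hcase
      have hε0 : 0 < bus L a - (D - r) := by linarith
      have hεr : bus L a - (D - r) ≤ r := by linarith [hbusLle a ha]
      obtain ⟨w, hw1, hw2⟩ := bus_move hug hgc hL a hε0
      exact ⟨w, ⟨⟨a, ha, hw1.trans hεr⟩, by
        simp only [hWpdef, mem_setOf_eq]; linarith⟩, hw1.trans hεr⟩
  have hcov2 : ∀ a ∈ (A.1 : Set X), ∃ w ∈ (N ∩ Wp) ∩ Wq, dist a w ≤ r := by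
    intro a ha
    have hσ : bus L a + bus Lq a ≤ Δ := hmaxσ a ha
    have hΔ4 : Δ ≤ 2*D - 4*r := by linarith
    by_cases hcaseq : bus Lq a ≤ D - r
    · by_cases hcasep : bus L a ≤ D - r
      · exact ⟨a, ⟨⟨subset_closedNbhd hr0.le ha, hcasep⟩, hcaseq⟩, by simp [hr0.le]⟩
      · push_neg at hcasep
        have hε0 : 0 < bus L a - (D - r) := by linarith
        have hεr : bus L a - (D - r) ≤ r := by linarith [hbusLle a ha]
        obtain ⟨w, hw1, hw2⟩ := bus_move hug hgc hL a hε0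
        have hlip := bus_lipschitz hLq w a
        have hwq : bus Lq w ≤ D - r := by
          rw [dist_comm w a] at hlip
          linarith
        exact ⟨w, ⟨⟨⟨a, ha, hw1.trans hεr⟩, by
          simp only [hWpdef, mem_setOf_eq]; linarith⟩, hwq⟩, hw1.trans hεr⟩
    · push_neg at hcaseq
      have hε0 : 0 < bus Lq a - (D - r) := by linarith
      have hεr : bus Lq a - (D - r) ≤ r := by linarith [hbusLqle a ha]
      obtain ⟨w, hw1, hw2⟩ := bus_move hug hgc hLq a hε0
      have hlip := bus_lipschitz hL w a
      have hwp : bus L w ≤ D - r := by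
        rw [dist_comm w a] at hlip
        linarith
      exact ⟨w, ⟨⟨⟨a, ha, hw1.trans hεr⟩, hwp⟩, by
        simp only [hWqdef, mem_setOf_eq]; linarith⟩, hw1.trans hεr⟩
  -- L r belongs to A ∩ everything
  have hsegL : IsGeodesicSegment L p q := line_isSeg hL hL0 (by rw [← hD]; exact hLD)
  have hLrA : L r ∈ (A.1 : Set X) :=
    A.2 p hp q hq L hsegL ⟨r, ⟨hr0.le, by rw [← hD]; linarith⟩, rfl⟩
  -- Hausdorff distance bounds
  have hdA : ∀ S : Set X, S ⊆ N → (∀ a ∈ (A.1 : Set X), ∃ w ∈ S, dist a w ≤ r) →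
      hausdorffDist (A.1 : Set X) S ≤ r := by
    intro S hSN hcov
    apply hausdorffDist_le_of_mem_dist hr0.le hcov
    rintro w hw
    obtain ⟨a, ha, haw⟩ := hSN hw
    exact ⟨a, ha, by rwa [dist_comm]⟩
  have hub : ∀ S T : Set X, IsCompact S → S.Nonempty → T.Nonempty → S ⊆ N → T ⊆ N →
      (∀ a ∈ (A.1 : Set X), ∃ w ∈ S, dist a w ≤ r) →
      (∀ a ∈ (A.1 : Set X), ∃ w ∈ T, dist a w ≤ r) →
      hausdorffDist S T ≤ 2*r := by
    intro S T hS hSne hTne hSN hTN hcS hcT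
    have h1 : hausdorffDist S (A.1 : Set X) ≤ r := by
      rw [hausdorffDist_comm]; exact hdA S hSN hcS
    have h2 : hausdorffDist (A.1 : Set X) T ≤ r := hdA T hTN hcT
    calc hausdorffDist S T ≤
        hausdorffDist S (A.1 : Set X) + hausdorffDist (A.1 : Set X) T :=
          hausdorffDist_triangle (hedist_ne_top' hS hAc hSne hAne)
    _ ≤ 2*r := by linarith
  have hlb : ∀ (S T : Set X) (w : X), IsCompact S → IsCompact T → S.Nonempty → T.Nonempty →
      w ∈ S → (∀ y ∈ T, 2*r ≤ dist w y) → 2*r ≤ hausdorffDist S T := by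
    intro S T w hS hT hSne hTne hw hfar
    exact le_trans (le_infDist_of hT hTne hfar) (dist_le_hd hS hT hSne hTne hw)
  -- package the four elements
  have hS2cl : IsClosed ((N ∩ Wp) ∩ Wq) := ((hNcl.inter hWpcl).inter hWqcl)
  have hS3cl : IsClosed (N ∩ Wq) := hNcl.inter hWqcl
  have hS4cl : IsClosed (N ∩ Wp) := hNcl.inter hWpcl
  have hS2c : IsCompact ((N ∩ Wp) ∩ Wq) :=
    hNc.of_isClosed_subset hS2cl (fun z hz => hz.1.1)
  have hS3c : IsCompact (N ∩ Wq) := hNc.of_isClosed_subset hS3cl (fun z hz => hz.1)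
  have hS4c : IsCompact (N ∩ Wp) := hNc.of_isClosed_subset hS4cl (fun z hz => hz.1)
  have hS1ne : N.Nonempty := ⟨p, subset_closedNbhd hr0.le hp⟩
  have hLrWp : L r ∈ Wp := by
    simp only [hWpdef, mem_setOf_eq, hbusL]; linarith
  have hLrWq : L r ∈ Wq := by
    simp only [hWqdef, mem_setOf_eq]
    have : L r = Lq (D - r) := by rw [hLqval]; congr 1; ring
    rw [this, hbusLq]
  have hS2ne : ((N ∩ Wp) ∩ Wq).Nonempty :=
    ⟨L r, ⟨⟨subset_closedNbhd hr0.le hLrA, hLrWp⟩, hLrWq⟩⟩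
  have hS3ne : (N ∩ Wq).Nonempty := ⟨qr, hqrN, hqrWq⟩
  have hS4ne : (N ∩ Wp).Nonempty := ⟨pr, hprN, hprWp⟩
  have hS2m : ∀ a ∈ (N ∩ Wp) ∩ Wq, ∀ b ∈ (N ∩ Wp) ∩ Wq, m a b ∈ (N ∩ Wp) ∩ Wq := by
    rintro a ⟨⟨ha1, ha2⟩, ha3⟩ b ⟨⟨hb1, hb2⟩, hb3⟩
    exact ⟨⟨hNm a ha1 b hb1, hWpm a ha2 b hb2⟩, hWqm a ha3 b hb3⟩
  have hS3m : ∀ a ∈ N ∩ Wq, ∀ b ∈ N ∩ Wq, m a b ∈ N ∩ Wq := by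
    rintro a ⟨ha1, ha2⟩ b ⟨hb1, hb2⟩
    exact ⟨hNm a ha1 b hb1, hWqm a ha2 b hb2⟩
  have hS4m : ∀ a ∈ N ∩ Wp, ∀ b ∈ N ∩ Wp, m a b ∈ N ∩ Wp := by
    rintro a ⟨ha1, ha2⟩ b ⟨hb1, hb2⟩
    exact ⟨hNm a ha1 b hb1, hWpm a ha2 b hb2⟩
  refine ⟨r, hr0,
    ⟨⟨⟨N, hNc⟩, hS1ne⟩, isGeodConvex_of_closed hmid hNcl hNm⟩,
    ⟨⟨⟨(N ∩ Wp) ∩ Wq, hS2c⟩, hS2ne⟩, isGeodConvex_of_closed hmid hS2cl hS2m⟩,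
    ⟨⟨⟨N ∩ Wq, hS3c⟩, hS3ne⟩, isGeodConvex_of_closed hmid hS3cl hS3m⟩,
    ⟨⟨⟨N ∩ Wp, hS4c⟩, hS4ne⟩, isGeodConvex_of_closed hmid hS4cl hS4m⟩,
    ?_, ?_, ?_, ?_, ?_, ?_, ?_, ?_, ?_, ?_⟩
  -- distances from A
  · show hausdorffDist (A.1 : Set X) N ≤ r
    exact hdA N (fun z hz => hz) hcov1
  · show hausdorffDist (A.1 : Set X) ((N ∩ Wp) ∩ Wq) ≤ r
    exact hdA _ (fun z hz => hz.1.1) hcov2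
  · show hausdorffDist (A.1 : Set X) (N ∩ Wq) ≤ r
    exact hdA _ (fun z hz => hz.1) hcovq
  · show hausdorffDist (A.1 : Set X) (N ∩ Wp) ≤ r
    exact hdA _ (fun z hz => hz.1) hcovp
  -- pairwise distances
  · show hausdorffDist N ((N ∩ Wp) ∩ Wq) = 2*r
    refine le_antisymm (hub _ _ hNc hS1ne hS2ne (fun z hz => hz) (fun z hz => hz.1.1) hcov1 hcov2) ?_
    refine hlb _ _ qr hNc hS2c hS1ne hS2ne hqrN ?_
    intro y hy
    rw [dist_comm]
    exact havoidq y hy.1.2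
  · show hausdorffDist N (N ∩ Wq) = 2*r
    refine le_antisymm (hub _ _ hNc hS1ne hS3ne (fun z hz => hz) (fun z hz => hz.1) hcov1 hcovq) ?_
    refine hlb _ _ pr hNc hS3c hS1ne hS3ne hprN ?_
    intro y hy
    rw [dist_comm]
    exact havoidp y hy.2
  · show hausdorffDist N (N ∩ Wp) = 2*r
    refine le_antisymm (hub _ _ hNc hS1ne hS4ne (fun z hz => hz) (fun z hz => hz.1) hcov1 hcovp) ?_
    refine hlb _ _ qr hNc hS4c hS1ne hS4ne hqrN ?_
    intro y hy
    rw [dist_comm]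
    exact havoidq y hy.2
  · show hausdorffDist ((N ∩ Wp) ∩ Wq) (N ∩ Wq) = 2*r
    refine le_antisymm (hub _ _ hS2c hS2ne hS3ne (fun z hz => hz.1.1) (fun z hz => hz.1) hcov2 hcovq) ?_
    have h := hlb (N ∩ Wq) ((N ∩ Wp) ∩ Wq) qr hS3c hS2c hS3ne hS2ne ⟨hqrN, hqrWq⟩ ?_
    · rw [hausdorffDist_comm] at h; exact h
    · intro y hy
      rw [dist_comm]
      exact havoidq y hy.1.2
  · show hausdorffDist ((N ∩ Wp) ∩ Wq) (N ∩ Wp) = 2*r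
    refine le_antisymm (hub _ _ hS2c hS2ne hS4ne (fun z hz => hz.1.1) (fun z hz => hz.1) hcov2 hcovp) ?_
    have h := hlb (N ∩ Wp) ((N ∩ Wp) ∩ Wq) pr hS4c hS2c hS4ne hS2ne ⟨hprN, hprWp⟩ ?_
    · rw [hausdorffDist_comm] at h; exact h
    · intro y hy
      rw [dist_comm]
      exact havoidp y hy.2
  · show hausdorffDist (N ∩ Wq) (N ∩ Wp) = 2*r
    refine le_antisymm (hub _ _ hS3c hS3ne hS4ne (fun z hz => hz.1) (fun z hz => hz.1) hcovq hcovp) ?_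
    refine hlb _ _ qr hS3c hS4c hS3ne hS4ne ⟨hqrN, hqrWq⟩ ?_
    intro y hy
    rw [dist_comm]
    exact havoidq y hy.2

end CCAux
namespace CCAux

variable {X : Type*} [MetricSpace X] {m : X → X → X}

open Metric Set

theorem hd_ball_singleton [ProperSpace X] (hug : IsUniquelyGeodesic X)
    (hgc : IsGeodesicallyComplete X) {x z : X} {R : ℝ} (hR : 0 ≤ R) :
    hausdorffDist (closedBall x R) {z} = dist z x + R := by
  apply le_antisymm
  · apply hd_singleton_le (nonempty_closedBall.mpr hR)
    intro a ha
    rw [mem_closedBall] at ha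
    calc dist z a ≤ dist z x + dist x a := dist_triangle _ _ _
    _ ≤ dist z x + R := by rw [dist_comm x a]; linarith
  · rcases eq_or_ne z x with rfl | hzx
    · obtain ⟨L, hL, hL0, -⟩ := exists_line hug hgc z z
      have hzr : dist z (L R) = R := by
        have h := line_dist hL 0 R
        rw [hL0, zero_sub, abs_neg, abs_of_nonneg hR] at h
        exact h
      have hw : L R ∈ closedBall z R := by rw [mem_closedBall, dist_comm, hzr]
      have h3 := dist_le_hd_singleton (x := z) (isCompact_closedBall z R)
        (nonempty_closedBall.mpr hR) hw
      rw [hzr] at h3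
      rw [dist_self, zero_add]
      exact h3
    · obtain ⟨L, hL, hL0, hLd⟩ := exists_line hug hgc z x
      have h2 : dist z (L (dist z x + R)) = dist z x + R := by
        have h := line_dist hL 0 (dist z x + R)
        rw [hL0, zero_sub, abs_neg,
          abs_of_nonneg (by positivity : (0:ℝ) ≤ dist z x + R)] at h
        exact h
      have hw : L (dist z x + R) ∈ closedBall x R := by
        have h := line_dist hL (dist z x + R) (dist z x)
        rw [hLd] at h
        rw [mem_closedBall, h, show dist z x + R - dist z x = R by ring, abs_of_nonneg hR]
      have h3 := dist_le_hd_singleton (x := z) (isCompact_closedBall x R)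
        (nonempty_closedBall.mpr hR) hw
      rw [h2] at h3
      exact h3

theorem ball_rigid (hug : IsUniquelyGeodesic X) (hgc : IsGeodesicallyComplete X)
    (hns : GeodesicsDoNotSplit X) {x : X} {R : ℝ} (hR : 0 ≤ R) {A : Set X}
    (hAc : IsCompact A) (hAne : A.Nonempty) (hAconv : IsGeodConvex A)
    (hprof : ∀ z : X, hausdorffDist A {z} = dist z x + R) :
    A = closedBall x R := by
  have hsub : A ⊆ closedBall x R := by
    intro a ha
    rw [mem_closedBall]
    have h := dist_le_hd_singleton (x := x) hAc hAne ha
    rw [hprof x, dist_self, zero_add] at h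
    rwa [dist_comm]
  rcases eq_or_lt_of_le hR with h0 | hRpos
  · rw [← h0, closedBall_zero]
    obtain ⟨a, ha⟩ := hAne
    have hax : a = x := by
      have := hsub ha
      rw [← h0, mem_closedBall] at this
      exact dist_le_zero.mp this
    apply Set.eq_singleton_iff_unique_mem.mpr
    refine ⟨hax ▸ ha, fun b hb => ?_⟩
    have := hsub hb
    rw [← h0, mem_closedBall] at this
    exact dist_le_zero.mp this
  · have hsphere : ∀ w : X, dist x w = R → w ∈ A := by
      intro w hw
      have hwx : w ≠ x := by intro e; rw [e, dist_self] at hw; linarith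
      obtain ⟨L, hL, hL0, hLd⟩ := exists_line hug hgc w x
      have hdwx : dist w x = R := by rw [dist_comm]; exact hw
      have hdzx : dist (L (R + 1)) x = 1 := by
        rw [← hLd]
        have h := line_dist hL (R + 1) (dist w x)
        rw [h, hdwx, show R + 1 - R = 1 by ring]
        norm_num
      have hdzw : dist (L (R + 1)) w = R + 1 := by
        rw [← hL0]
        have h := line_dist hL (R + 1) 0
        rw [h, sub_zero, abs_of_nonneg (by linarith)]
      obtain ⟨a, ha, hfar⟩ := exists_farthest hAc hAne (L (R + 1))
      have hda : dist (L (R + 1)) a = 1 + R := by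
        have h1 : hausdorffDist A {L (R + 1)} = dist (L (R + 1)) a :=
          le_antisymm (hd_singleton_le hAne hfar) (dist_le_hd_singleton hAc hAne ha)
        rw [hprof (L (R + 1)), hdzx] at h1
        exact h1.symm
      have hxa : dist x a ≤ R := by
        have := hsub ha
        rwa [mem_closedBall, dist_comm] at this
      have htri := dist_triangle (L (R + 1)) x a
      have hxa' : dist x a = R := by linarith
      have hzx : L (R + 1) ≠ x := by
        intro e; rw [e, dist_self] at hdzx; norm_num at hdzx
      have he := ext_unique hug hgc hns hzx
        (show dist (L (R+1)) a = dist (L (R+1)) x + R by rw [hda, hdzx]) hxa'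
        (show dist (L (R+1)) w = dist (L (R+1)) x + R by rw [hdzw, hdzx]; ring) hw
      rw [← he]; exact ha
    refine Set.Subset.antisymm hsub ?_
    intro v hv
    rw [mem_closedBall, dist_comm] at hv
    obtain ⟨L, hL, hL0, hLd⟩ := exists_line hug hgc x v
    have hw1 : L (-R) ∈ A := by
      apply hsphere
      rw [← hL0]
      have h := line_dist hL 0 (-R)
      rw [h, zero_sub, neg_neg, abs_of_nonneg hR]
    have hw2 : L R ∈ A := by
      apply hsphere
      rw [← hL0]
      have h := line_dist hL 0 R
      rw [h, zero_sub, abs_neg, abs_of_nonneg hR]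
    have hdw : dist (L (-R)) (L R) = 2*R := by
      rw [line_dist hL, show -R - R = -(2*R) by ring, abs_neg,
        abs_of_nonneg (by linarith)]
    have hseg : IsGeodesicSegment (fun t => L (-R + t)) (L (-R)) (L R) := by
      refine ⟨by simp, ?_, fun u _ v' _ => ?_⟩
      · rw [hdw]; congr 1; ring
      · rw [hL.dist_eq, Real.dist_eq]; congr 1; ring
    have himg := hAconv _ hw1 _ hw2 _ hseg
    have hvmem : v = (fun t => L (-R + t)) (R + dist x v) := by
      show v = L (-R + (R + dist x v))
      rw [show -R + (R + dist x v) = dist x v by ring, hLd]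
    rw [hvmem]
    apply himg
    refine ⟨R + dist x v, ⟨by positivity, ?_⟩, rfl⟩
    rw [hdw]
    linarith

theorem mem_iff_ball [ProperSpace X] (hug : IsUniquelyGeodesic X)
    (hgc : IsGeodesicallyComplete X)
    (hmid : ∀ (x y : X) (γ : ℝ → X), IsGeodesicSegment γ x y → m x y = γ (dist x y / 2))
    (hconv : IsConvexMidpointMap m)
    {C : Set X} (hCc : IsCompact C) (hCne : C.Nonempty)
    (hCm : ∀ a ∈ C, ∀ b ∈ C, m a b ∈ C) (x : X) :
    x ∈ C ↔ hausdorffDist C (closedBall x (hausdorffDist C {x})) ≤ hausdorffDist C {x} := by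
  set R := hausdorffDist C {x} with hRdef
  have hR0 : 0 ≤ R := hausdorffDist_nonneg
  constructor
  · intro hx
    apply hausdorffDist_le_of_mem_dist hR0
    · intro c hc
      refine ⟨c, ?_, by simp [hR0]⟩
      rw [mem_closedBall]
      have := dist_le_hd_singleton (x := x) hCc hCne hc
      rw [← hRdef] at this
      rwa [dist_comm]
    · intro y hy
      rw [mem_closedBall] at hy
      exact ⟨x, hx, hy⟩
  · intro hd
    by_contra hx
    have hδpos : 0 < infDist x C := by
      rw [← (hCc.isClosed.notMem_iff_infDist_pos hCne)]
      exact hx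
    obtain ⟨cstar, hcstar, hcd⟩ := hCc.exists_infDist_eq_dist hCne x
    set δ := dist cstar x with hδdef
    have hδeq : infDist x C = δ := by rw [hcd, dist_comm]
    have hδ0 : 0 < δ := by rw [← hδeq]; exact hδpos
    have hcx : cstar ≠ x := by intro e; rw [e, dist_self] at hδdef; linarith [hδ0, hδdef]
    obtain ⟨L, hL, hL0, hLd⟩ := exists_line hug hgc cstar x
    rw [← hδdef] at hLd
    have hbase : ∀ u, 0 ≤ u → u ≤ δ → u ≤ infDist (L u) C := by
      intro u h0 h1
      apply le_infDist_of hCc hCne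
      intro c hc
      have h2 : dist x c ≥ δ := by
        rw [← hδeq]
        exact infDist_le_dist_of_mem hc
      have h3 : dist x (L u) = δ - u := by
        rw [← hLd]
        have h := line_dist hL δ u
        rw [h, abs_of_nonneg (by linarith)]
      have htri := dist_triangle x (L u) c
      linarith
    have hdouble : ∀ u, 0 ≤ u → 2 * infDist (L u) C ≤ infDist (L (2*u)) C := by
      intro u hu
      apply le_infDist_of hCc hCne
      intro c hc
      have hmem := hCm cstar hcstar c hc
      have h1 : infDist (L u) C ≤ dist (L u) (m cstar c) := infDist_le_dist_of_mem hmem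
      have h2 : m (L 0) (L (2*u)) = L u := by
        rw [m_line hmid hL (by linarith : (0:ℝ) ≤ 2*u)]
        congr 1; ring
      have h3 := hconv.2 (L 0) cstar (L (2*u)) c
      rw [h2, hL0, dist_self] at h3
      linarith
    have hiter : ∀ k : ℕ, ∀ u, 0 ≤ u → u ≤ 2^k * δ → u ≤ infDist (L u) C := by
      intro k
      induction k with
      | zero => intro u h0 h1; exact hbase u h0 (by simpa using h1)
      | succ k ih =>
        intro u h0 h1
        have h2 := ih (u/2) (by positivity) (by rw [pow_succ] at h1; linarith)
        have h3 := hdouble (u/2) (by positivity)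
        rw [show 2*(u/2) = u by ring] at h3
        linarith
    obtain ⟨k, hk⟩ := pow_unbounded_of_one_lt ((δ + R)/δ) (one_lt_two (α := ℝ))
    have hkb : δ + R ≤ 2^k * δ := by
      rw [div_lt_iff₀ hδ0] at hk
      linarith
    have hfinal : δ + R ≤ infDist (L (δ + R)) C :=
      hiter k _ (by positivity) hkb
    have hwball : L (δ + R) ∈ closedBall x R := by
      rw [mem_closedBall, ← hLd]
      have h := line_dist hL (δ + R) δ
      rw [h, show δ + R - δ = R by ring, abs_of_nonneg hR0]
    have hhd := dist_le_hd (isCompact_closedBall x R) hCc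
      (nonempty_closedBall.mpr hR0) hCne hwball
    rw [hausdorffDist_comm] at hhd
    linarith

end CCAux
open CCAux in
/-- **Theorem 1.1.** Every surjective isometry of the space of nonempty convex compact
subsets of a proper, uniquely geodesic, geodesically complete metric space in which
geodesics do not split and whose unique midpoint map is convex is induced by an
isometry of the underlying space. -/
theorem isometry_of_convexCompacts_induced [MetricSpace X] [ProperSpace X]
    (hug : IsUniquelyGeodesic X) (hgc : IsGeodesicallyComplete X)
    (hns : GeodesicsDoNotSplit X)
    (m : X → X → X)
    (hmid : ∀ (x y : X) (γ : ℝ → X), IsGeodesicSegment γ x y → m x y = γ (dist x y / 2))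
    (hconv : IsConvexMidpointMap m)
    (I : ConvexCompacts X ≃ᵢ ConvexCompacts X) :
    ∃ i : X ≃ᵢ X, ∀ C : ConvexCompacts X, ((I C).1 : Set X) = i '' (C.1 : Set X) := by
  classical
  -- clique property is transported by isometries
  have hclique_inv : ∀ (J : ConvexCompacts X ≃ᵢ ConvexCompacts X) (A : ConvexCompacts X),
      HasCliqueCC A → HasCliqueCC (J A) := by
    rintro J A ⟨r, hr, B₁, B₂, B₃, B₄, h1, h2, h3, h4, h12, h13, h14, h23, h24, h34⟩
    refine ⟨r, hr, J B₁, J B₂, J B₃, J B₄, ?_, ?_, ?_, ?_, ?_, ?_, ?_, ?_, ?_, ?_⟩ <;>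
      rw [J.dist_eq] <;> assumption
  -- singletons are sent to singletons
  have hsing : ∀ (J : ConvexCompacts X ≃ᵢ ConvexCompacts X) (x : X),
      ∃ y : X, ((J (singletonCC x)).1 : Set X) = {y} := by
    intro J x
    by_contra hcon
    push_neg at hcon
    have hnc : HasCliqueCC (J (singletonCC x)) :=
      clique_of_not_singleton hug hgc hns hmid hconv _ (by
        rintro ⟨y, hy⟩; exact hcon y hy)
    have hpull := hclique_inv J.symm _ hnc
    rw [J.symm_apply_apply] at hpull
    exact no_clique_of_singleton hug hgc hns x (singletonCC x) rfl hpull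
  choose i hi using fun x => hsing I x
  choose i' hi' using fun x => hsing I.symm x
  have hdist_s : ∀ x y : X, dist (singletonCC x) (singletonCC y) = dist x y := by
    intro x y
    rw [distCC]
    exact hd_singleton_singleton x y
  have hIs : ∀ x, I (singletonCC x) = singletonCC (i x) := fun x => ccext (hi x)
  have hIs' : ∀ x, I.symm (singletonCC x) = singletonCC (i' x) := fun x => ccext (hi' x)
  have hii' : ∀ x, i (i' x) = x := by
    intro x
    have h1 : I (singletonCC (i' x)) = singletonCC x := by
      rw [← hIs' x, I.apply_symm_apply]
    have h2 := hIs (i' x)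
    rw [h1] at h2
    have h3 := congrArg (fun C : ConvexCompacts X => (C.1 : Set X)) h2
    simp only [singletonCC] at h3
    exact (Set.singleton_eq_singleton_iff.mp h3).symm
  have hisom : Isometry i := Isometry.of_dist_eq fun x y => by
    rw [← hdist_s (i x) (i y), ← hIs x, ← hIs y, I.dist_eq, hdist_s]
  have hbij : Function.Bijective i := ⟨hisom.injective, fun y => ⟨i' y, hii' y⟩⟩
  let e : X ≃ᵢ X := ⟨Equiv.ofBijective i hbij, hisom⟩
  have he_apply : ∀ x, e x = i x := fun x => rfl
  -- image of a convex compact under an isometry equivalence is a convex compact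
  have himage : ∀ (g : X ≃ᵢ X) (S : Set X), IsGeodConvex S → IsGeodConvex (⇑g '' S) := by
    intro g S hS a' ha' b' hb' γ hγ
    obtain ⟨a, ha, rfl⟩ := ha'
    obtain ⟨b, hb, rfl⟩ := hb'
    have hdd : dist a b = dist (g a) (g b) := (g.dist_eq a b).symm
    have hγ' : IsGeodesicSegment (fun t => g.symm (γ t)) a b := by
      refine ⟨by show g.symm (γ 0) = a; rw [hγ.1, g.symm_apply_apply], ?_, ?_⟩
      · show g.symm (γ (dist a b)) = b
        rw [hdd, hγ.2.1, g.symm_apply_apply]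
      · intro s hs t ht
        rw [hdd] at hs ht
        rw [g.symm.dist_eq]
        exact hγ.2.2 s hs t ht
    rintro _ ⟨t, ht, rfl⟩
    rw [← hdd] at ht
    have hmem := hS a ha b hb _ hγ' ⟨t, ht, rfl⟩
    exact ⟨g.symm (γ t), hmem, by simp⟩
  let F : (X ≃ᵢ X) → ConvexCompacts X → ConvexCompacts X := fun g C =>
    ⟨⟨⟨⇑g '' (C.1 : Set X), C.1.isCompact.image g.continuous⟩,
      (C.1.nonempty).image _⟩, himage g _ C.2⟩
  have hFcoe : ∀ g C, ((F g C).1 : Set X) = ⇑g '' (C.1 : Set X) := fun _ _ => rfl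
  let Fe : ConvexCompacts X ≃ᵢ ConvexCompacts X :=
    { toFun := F e
      invFun := F e.symm
      left_inv := fun C => ccext (by
        rw [hFcoe, hFcoe]
        simp [Set.image_image])
      right_inv := fun C => ccext (by
        rw [hFcoe, hFcoe]
        simp [Set.image_image])
      isometry_toFun := Isometry.of_dist_eq fun C D => by
        rw [distCC, distCC]
        exact Metric.hausdorffDist_image e.isometry }
  set J := I.trans Fe.symm with hJdef
  have hJs : ∀ x, J (singletonCC x) = singletonCC x := by
    intro x
    show Fe.symm (I (singletonCC x)) = singletonCC x
    rw [hIs x]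
    have hfe : Fe (singletonCC x) = singletonCC (i x) := ccext (by
      show ⇑e '' {x} = {i x}
      rw [Set.image_singleton]
      rfl)
    rw [← hfe, Fe.symm_apply_apply]
  have hJs' : ∀ x, J.symm (singletonCC x) = singletonCC x := by
    intro x
    conv_lhs => rw [← hJs x]
    rw [J.symm_apply_apply]
  -- property: distances to singletons are preserved
  have hprofile : ∀ (J' : ConvexCompacts X ≃ᵢ ConvexCompacts X),
      (∀ x, J' (singletonCC x) = singletonCC x) →
      ∀ (C : ConvexCompacts X) (z : X),
      Metric.hausdorffDist ((J' C).1 : Set X) {z} = Metric.hausdorffDist (C.1 : Set X) {z} := by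
    intro J' hJ' C z
    have h1 : dist (J' C) (singletonCC z) = dist C (singletonCC z) := by
      conv_lhs => rw [show singletonCC z = J' (singletonCC z) from (hJ' z).symm]
      rw [J'.dist_eq]
    rw [distCC, distCC] at h1
    exact h1
  -- midpoint stability of closed balls
  have hballm : ∀ (x : X) (R : ℝ), ∀ a ∈ Metric.closedBall x R, ∀ b ∈ Metric.closedBall x R,
      m a b ∈ Metric.closedBall x R := by
    intro x R a ha b hb
    rw [Metric.mem_closedBall] at ha hb ⊢
    have h := hconv.2 a x b x
    rw [m_self hconv] at h
    linarith
  let ballCC : X → (R : ℝ) → 0 ≤ R → ConvexCompacts X := fun x R hR =>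
    ⟨⟨⟨Metric.closedBall x R, isCompact_closedBall x R⟩, Metric.nonempty_closedBall.mpr hR⟩,
      isGeodConvex_of_closed hmid Metric.isClosed_closedBall (hballm x R)⟩
  have hballcoe : ∀ x R hR, ((ballCC x R hR).1 : Set X) = Metric.closedBall x R :=
    fun _ _ _ => rfl
  -- singleton-fixing isometries fix balls
  have hJK : ∀ (J' : ConvexCompacts X ≃ᵢ ConvexCompacts X),
      (∀ x, J' (singletonCC x) = singletonCC x) →
      ∀ (x : X) (R : ℝ) (hR : 0 ≤ R), J' (ballCC x R hR) = ballCC x R hR := by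
    intro J' hJ' x R hR
    apply ccext
    rw [hballcoe]
    refine ball_rigid hug hgc hns hR (J' (ballCC x R hR)).1.isCompact
      (J' (ballCC x R hR)).1.nonempty (J' (ballCC x R hR)).2 ?_
    intro z
    rw [hprofile J' hJ' (ballCC x R hR) z]
    have : (((ballCC x R hR)).1 : Set X) = Metric.closedBall x R := rfl
    rw [this]
    exact hd_ball_singleton hug hgc hR
    exact hR
  -- J is the identity
  have hJid : ∀ C, J C = C := by
    intro C
    apply ccext
    apply Set.ext
    intro z
    have hmst : ∀ a ∈ (C.1 : Set X), ∀ b ∈ (C.1 : Set X), m a b ∈ (C.1 : Set X) :=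
      fun a ha b hb => m_mem_convex hug hmid C.2 ha hb
    have hmstJ : ∀ a ∈ ((J C).1 : Set X), ∀ b ∈ ((J C).1 : Set X), m a b ∈ ((J C).1 : Set X) :=
      fun a ha b hb => m_mem_convex hug hmid (J C).2 ha hb
    have hm1 := mem_iff_ball hug hgc hmid hconv C.1.isCompact C.1.nonempty hmst z
    have hm2 := mem_iff_ball hug hgc hmid hconv (J C).1.isCompact (J C).1.nonempty hmstJ z
    have hRJ : Metric.hausdorffDist ((J C).1 : Set X) {z} =
        Metric.hausdorffDist ((C).1 : Set X) {z} := hprofile J hJs C z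
    set R := Metric.hausdorffDist ((C).1 : Set X) {z} with hRdef
    have hR0 : 0 ≤ R := Metric.hausdorffDist_nonneg
    have hΦ : Metric.hausdorffDist ((J C).1 : Set X) (Metric.closedBall z R) =
        Metric.hausdorffDist ((C).1 : Set X) (Metric.closedBall z R) := by
      have h1 : dist (J C) (ballCC z R hR0) = dist C (ballCC z R hR0) := by
        conv_lhs => rw [show ballCC z R hR0 = J (ballCC z R hR0) from (hJK J hJs z R hR0).symm]
        rw [J.dist_eq]
      rw [distCC, distCC] at h1
      exact h1
    rw [hm1, hm2, hRJ, hΦ]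
  refine ⟨e, fun C => ?_⟩
  have hJC := hJid C
  have hIC : I C = Fe C := by
    have h := congrArg Fe hJC
    have h2 : Fe (J C) = I C := by
      show Fe (Fe.symm (I C)) = I C
      rw [Fe.apply_symm_apply]
    rw [h2] at h
    exact h
  rw [hIC]
  rfl
end

section
/- Let (X,d) be a metric space and m : X×X → X a midpoint map for (X,d). Then m is a convex midpoint map if and only if (X,d) is m-globally non-positively Busemann curved. -/
open Metric Set TopologicalSpace

variable {X : Type*}

/-- **Lemma 2.4.** A midpoint map `m` is convex if and only if `(X,d)` is
`m`-globally non-positively Busemann curved. -/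
theorem convexMidpointMap_iff_global_NPBC [MetricSpace X] (m : X → X → X)
    (hm : IsMidpointMap m) :
    IsConvexMidpointMap m ↔ ∀ x y z : X, dist (m z x) (m z y) ≤ dist x y / 2 := by
  constructor
  · rintro ⟨_, hc⟩ x y z
    have := hc z z x y
    simpa using this
  · intro h
    refine ⟨hm, fun x₁ x₂ y₁ y₂ => ?_⟩
    have h1 : dist (m x₁ y₁) (m x₂ y₁) ≤ dist x₁ x₂ / 2 := by
      rw [hm.1 x₁ y₁, hm.1 x₂ y₁]; exact h x₁ x₂ y₁
    have h2 : dist (m x₂ y₁) (m x₂ y₂) ≤ dist y₁ y₂ / 2 := h y₁ y₂ x₂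
    calc dist (m x₁ y₁) (m x₂ y₂) ≤ dist (m x₁ y₁) (m x₂ y₁) + dist (m x₂ y₁) (m x₂ y₂) :=
          dist_triangle _ _ _
      _ ≤ dist x₁ x₂ / 2 + dist y₁ y₂ / 2 := add_le_add h1 h2
      _ = (dist x₁ x₂ + dist y₁ y₂) / 2 := by ring
end

section
/- Let (X,d) be a metric space and let m₁, m₂ : X×X → X be two convex midpoint maps for (X,d). Then the map m̃ : X×X → X defined by m̃(x,y) := m₁(m₁(x,y), m₂(x,y)) for all x,y ∈ X is also a convex midpoint map for (X,d). -/
open Metric Set TopologicalSpace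

variable {X : Type*}

/-- **Lemma 2.6.** If `m₁, m₂` are convex midpoint maps, then
`m̃(x,y) := m₁(m₁(x,y), m₂(x,y))` is also a convex midpoint map. -/
theorem mix_convexMidpointMap [MetricSpace X] (m₁ m₂ : X → X → X)
    (h₁ : IsConvexMidpointMap m₁) (h₂ : IsConvexMidpointMap m₂) :
    IsConvexMidpointMap (fun x y => m₁ (m₁ x y) (m₂ x y)) := by
  obtain ⟨⟨hs₁, hd₁⟩, hc₁⟩ := h₁
  obtain ⟨⟨hs₂, hd₂⟩, hc₂⟩ := h₂
  have hfix : ∀ x : X, m₁ x x = x := by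
    intro x
    have := (hd₁ x x).1
    rw [dist_self] at this
    simpa [dist_eq_zero] using this
  have key : ∀ x y : X, dist (m₁ (m₁ x y) (m₂ x y)) x = dist x y / 2 ∧
      dist (m₁ (m₁ x y) (m₂ x y)) y = dist x y / 2 := by
    intro x y
    have hx : dist (m₁ (m₁ x y) (m₂ x y)) x ≤ dist x y / 2 := by
      calc dist (m₁ (m₁ x y) (m₂ x y)) x = dist (m₁ (m₁ x y) (m₂ x y)) (m₁ x x) := by
            rw [hfix]
        _ ≤ (dist (m₁ x y) x + dist (m₂ x y) x) / 2 := hc₁ _ _ _ _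
        _ = dist x y / 2 := by rw [(hd₁ x y).1, (hd₂ x y).1]; ring
    have hy : dist (m₁ (m₁ x y) (m₂ x y)) y ≤ dist x y / 2 := by
      calc dist (m₁ (m₁ x y) (m₂ x y)) y = dist (m₁ (m₁ x y) (m₂ x y)) (m₁ y y) := by
            rw [hfix]
        _ ≤ (dist (m₁ x y) y + dist (m₂ x y) y) / 2 := hc₁ _ _ _ _
        _ = dist x y / 2 := by rw [(hd₁ x y).2, (hd₂ x y).2]; ring
    have htri : dist x y ≤ dist (m₁ (m₁ x y) (m₂ x y)) x + dist (m₁ (m₁ x y) (m₂ x y)) y := by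
      calc dist x y ≤ dist x (m₁ (m₁ x y) (m₂ x y)) + dist (m₁ (m₁ x y) (m₂ x y)) y :=
            dist_triangle _ _ _
        _ = _ := by rw [dist_comm x]
    constructor <;> linarith
  refine ⟨⟨fun x y => by simp only []; rw [hs₁ x y, hs₂ x y], fun x y => key x y⟩, ?_⟩
  intro x₁ x₂ y₁ y₂
  calc dist (m₁ (m₁ x₁ y₁) (m₂ x₁ y₁)) (m₁ (m₁ x₂ y₂) (m₂ x₂ y₂))
      ≤ (dist (m₁ x₁ y₁) (m₁ x₂ y₂) + dist (m₂ x₁ y₁) (m₂ x₂ y₂)) / 2 := hc₁ _ _ _ _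
    _ ≤ ((dist x₁ x₂ + dist y₁ y₂) / 2 + (dist x₁ x₂ + dist y₁ y₂) / 2) / 2 := by
        have := hc₁ x₁ x₂ y₁ y₂
        have := hc₂ x₁ x₂ y₁ y₂
        linarith
    _ = (dist x₁ x₂ + dist y₁ y₂) / 2 := by ring
end

section
/- Let (X,d) be a metric space and m : X×X → X a convex midpoint map. Then the m-convex hull operation conv_m is 1-Lipschitz with respect to the Hausdorff metric on nonempty closed bounded subsets: for all nonempty closed bounded subsets B, B' of X, d_H(conv_m(B), conv_m(B')) ≤ d_H(B, B'). -/
open Metric Set TopologicalSpace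

variable {X : Type*}

/-! The hull of `B` lies in every closed `m`-convex set containing `B`, and by convexity of `m`
the closed `r`-neighbourhood of an `m`-convex set is again closed and `m`-convex, since
`2 d(m(x,y), S) ≤ d(x, S) + d(y, S)`. Taking `S = conv_m(B')` and `r = d_H(B, B')` puts
`conv_m(B)` within `r` of `conv_m(B')`, and symmetrically. -/

section MConvexHull

variable [MetricSpace X] {m : X → X → X}

lemma subset_mConvexHull (m : X → X → X) (A : Set X) : A ⊆ mConvexHull m A :=
  fun _ hx _ hC => hC.2.2 hx

lemma mConvexHull_subset {A C : Set X} (hC : IsClosed C) (hmC : MConvexSet m C) (hAC : A ⊆ C) :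
    mConvexHull m A ⊆ C :=
  sInter_subset_of_mem ⟨hC, hmC, hAC⟩

lemma mConvexSet_mConvexHull (A : Set X) : MConvexSet m (mConvexHull m A) :=
  fun _ ha _ ha' C hC => hC.2.1 _ (ha C hC) _ (ha' C hC)

lemma two_mul_edist_le_of_dist_le
    (hm : ∀ x₁ x₂ y₁ y₂ : X, dist (m x₁ y₁) (m x₂ y₂) ≤ (dist x₁ x₂ + dist y₁ y₂) / 2)
    (x₁ x₂ y₁ y₂ : X) : 2 * edist (m x₁ y₁) (m x₂ y₂) ≤ edist x₁ x₂ + edist y₁ y₂ := by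
  simp only [edist_dist]
  rw [← ENNReal.ofReal_add dist_nonneg dist_nonneg, ← ENNReal.ofReal_ofNat 2,
    ← ENNReal.ofReal_mul zero_le_two]
  exact ENNReal.ofReal_le_ofReal (by linarith [hm x₁ x₂ y₁ y₂])

lemma MConvexSet.two_mul_infEDist_le
    (hm : ∀ x₁ x₂ y₁ y₂ : X, dist (m x₁ y₁) (m x₂ y₂) ≤ (dist x₁ x₂ + dist y₁ y₂) / 2)
    {S : Set X} (hS : MConvexSet m S) (x y : X) :
    2 * infEDist (m x y) S ≤ infEDist x S + infEDist y S :=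
  ENNReal.le_iInf₂_add_iInf₂ fun a ha a' ha' =>
    (mul_le_mul_right (infEDist_le_edist_of_mem (hS a ha a' ha')) 2).trans
      (two_mul_edist_le_of_dist_le hm x a y a')

lemma MConvexSet.setOf_infEDist_le
    (hm : ∀ x₁ x₂ y₁ y₂ : X, dist (m x₁ y₁) (m x₂ y₂) ≤ (dist x₁ x₂ + dist y₁ y₂) / 2)
    {S : Set X} (hS : MConvexSet m S) (r : ENNReal) : MConvexSet m {x | infEDist x S ≤ r} := by
  intro x hx y hy
  have h2r : 2 * infEDist (m x y) S ≤ 2 * r :=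
    (hS.two_mul_infEDist_le hm x y).trans (two_mul r ▸ add_le_add hx hy)
  exact (ENNReal.mul_le_mul_iff_right two_ne_zero ENNReal.ofNat_ne_top).1 h2r

lemma infEDist_mConvexHull_le
    (hm : ∀ x₁ x₂ y₁ y₂ : X, dist (m x₁ y₁) (m x₂ y₂) ≤ (dist x₁ x₂ + dist y₁ y₂) / 2)
    {A B : Set X} {r : ENNReal} (h : ∀ a ∈ A, infEDist a B ≤ r) :
    ∀ x ∈ mConvexHull m A, infEDist x (mConvexHull m B) ≤ r :=
  mConvexHull_subset (isClosed_le continuous_infEDist continuous_const)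
    ((mConvexSet_mConvexHull B).setOf_infEDist_le hm r)
    fun a ha => (infEDist_anti (subset_mConvexHull m B)).trans (h a ha)

lemma hausdorffEDist_mConvexHull_le
    (hm : ∀ x₁ x₂ y₁ y₂ : X, dist (m x₁ y₁) (m x₂ y₂) ≤ (dist x₁ x₂ + dist y₁ y₂) / 2)
    (A B : Set X) : hausdorffEDist (mConvexHull m A) (mConvexHull m B) ≤ hausdorffEDist A B :=
  hausdorffEDist_le_of_infEDist
    (infEDist_mConvexHull_le hm fun _ ha => infEDist_le_hausdorffEDist_of_mem ha)
    (infEDist_mConvexHull_le hm fun _ ha =>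
      hausdorffEDist_comm (s := A) ▸ infEDist_le_hausdorffEDist_of_mem ha)

end MConvexHull

theorem mConvexHull_lipschitz_general [MetricSpace X] (m : X → X → X)
    (hconv : IsConvexMidpointMap m) (B B' : Set X)
    (hBne : B.Nonempty) (hBbd : Bornology.IsBounded B)
    (hB'ne : B'.Nonempty) (hB'bd : Bornology.IsBounded B') :
    hausdorffDist (mConvexHull m B) (mConvexHull m B') ≤ hausdorffDist B B' :=
  ENNReal.toReal_mono (hausdorffEDist_ne_top_of_nonempty_of_bounded hBne hB'ne hBbd hB'bd)
    (hausdorffEDist_mConvexHull_le hconv.2 B B')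

/-- **Lemma 2.8 (first part).** The `m`-convex hull operation is `1`-Lipschitz
with respect to the Hausdorff distance on nonempty closed bounded sets. -/
theorem mConvexHull_lipschitz [MetricSpace X] (m : X → X → X)
    (hconv : IsConvexMidpointMap m) (B B' : Set X)
    (hBne : B.Nonempty) (hBcl : IsClosed B) (hBbd : Bornology.IsBounded B)
    (hB'ne : B'.Nonempty) (hB'cl : IsClosed B') (hB'bd : Bornology.IsBounded B') :
    hausdorffDist (mConvexHull m B) (mConvexHull m B') ≤ hausdorffDist B B' :=
  mConvexHull_lipschitz_general m hconv B B' hBne hBbd hB'ne hB'bd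
end

section
/- Let (X,d) be a proper metric space and m : X×X → X a convex midpoint map for (X,d). Let C_m denote the set of nonempty closed bounded m-convex subsets of X, endowed with the Hausdorff metric d_H. Then the map 𝔐 : C_m × C_m → C_m defined by 𝔐(A,B) := N_{d_H(A,B)/2}(A) ∩ N_{d_H(A,B)/2}(B) is a midpoint map for (C_m, d_H); in particular 𝔐(A,B) is a nonempty closed bounded m-convex subset of X and d_H(A, 𝔐(A,B)) = d_H(A,B)/2 = d_H(B, 𝔐(A,B)) for all A,B ∈ C_m. -/
open Metric Set TopologicalSpace

variable {X : Type*}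

/-- **Proposition 2.10.** For a convex midpoint map `m` on a proper metric space
`(X,d)`, the map `𝔐(A,B) := N_{d_H(A,B)/2}(A) ∩ N_{d_H(A,B)/2}(B)` is a midpoint map
on the set `𝒞_m` of nonempty closed bounded `m`-convex subsets of `X`, with respect
to the Hausdorff distance. -/
theorem frakM_midpointMap_on_Cm [MetricSpace X] [ProperSpace X] (m : X → X → X)
    (hconv : IsConvexMidpointMap m) :
    ∀ A B : Set X,
      (A.Nonempty ∧ IsClosed A ∧ Bornology.IsBounded A ∧ MConvexSet m A) →
      (B.Nonempty ∧ IsClosed B ∧ Bornology.IsBounded B ∧ MConvexSet m B) →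
      let MAB := closedNbhd (hausdorffDist A B / 2) A ∩ closedNbhd (hausdorffDist A B / 2) B
      (MAB.Nonempty ∧ IsClosed MAB ∧ Bornology.IsBounded MAB ∧ MConvexSet m MAB) ∧
      hausdorffDist A MAB = hausdorffDist A B / 2 ∧
      hausdorffDist B MAB = hausdorffDist A B / 2 := by
  rintro A B ⟨hAne, hAcl, hAbd, hAm⟩ ⟨hBne, hBcl, hBbd, hBm⟩
  intro MAB
  have hABfin : EMetric.hausdorffEdist A B ≠ ⊤ :=
    hausdorffEdist_ne_top_of_nonempty_of_bounded hAne hBne hAbd hBbd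
  set r : ℝ := hausdorffDist A B / 2 with hrdef
  have hr0 : 0 ≤ r := by
    have := hausdorffDist_nonneg (s := A) (t := B); rw [hrdef]; linarith
  have hAcomp : IsCompact A := Metric.isCompact_of_isClosed_isBounded hAcl hAbd
  have hBcomp : IsCompact B := Metric.isCompact_of_isClosed_isBounded hBcl hBbd
  have hsym := hconv.1.1
  have hmid := hconv.1.2
  -- key: every point of A is within r of a point of MAB, and symmetrically
  have keyA : ∀ a ∈ A, ∃ p ∈ MAB, dist a p ≤ r := by
    intro a ha
    obtain ⟨b, hb, hab⟩ := hBcomp.exists_infDist_eq_dist hBne a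
    have hd : dist a b ≤ 2 * r := by
      have h1 : infDist a B ≤ hausdorffDist A B := infDist_le_hausdorffDist_of_mem ha hABfin
      rw [← hab]; rw [hrdef]; linarith
    have h1 := (hmid a b).1
    have h2 := (hmid a b).2
    refine ⟨m a b, ⟨⟨a, ha, ?_⟩, ⟨b, hb, ?_⟩⟩, ?_⟩
    · rw [dist_comm]; linarith
    · rw [dist_comm]; linarith
    · rw [dist_comm]; linarith
  have keyB : ∀ b ∈ B, ∃ p ∈ MAB, dist b p ≤ r := by
    intro b hb
    obtain ⟨a, ha, hba⟩ := hAcomp.exists_infDist_eq_dist hAne b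
    have hd : dist b a ≤ 2 * r := by
      have h1 : infDist b A ≤ hausdorffDist B A :=
        infDist_le_hausdorffDist_of_mem hb (by rwa [EMetric.hausdorffEdist_comm])
      rw [← hba]; rw [hrdef, hausdorffDist_comm]; linarith
    have h1 := (hmid b a).1
    have h2 := (hmid b a).2
    refine ⟨m b a, ⟨⟨a, ha, ?_⟩, ⟨b, hb, ?_⟩⟩, ?_⟩
    · rw [dist_comm]; linarith
    · rw [dist_comm]; linarith
    · rw [dist_comm]; linarith
  obtain ⟨a₀, ha₀⟩ := id hAne
  obtain ⟨p₀, hp₀, _⟩ := keyA a₀ ha₀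
  have hMne : MAB.Nonempty := ⟨p₀, hp₀⟩
  -- closedness
  have hclosed : ∀ C : Set X, IsCompact C → C.Nonempty → IsClosed (closedNbhd r C) := by
    intro C hC hCne
    have heq : closedNbhd r C = {x | infDist x C ≤ r} := by
      ext x
      constructor
      · rintro ⟨c, hc, hcx⟩
        exact le_trans (infDist_le_dist_of_mem hc) (by rwa [dist_comm])
      · intro hx
        simp only [Set.mem_setOf_eq] at hx
        obtain ⟨c, hc, hcd⟩ := hC.exists_infDist_eq_dist hCne x
        exact ⟨c, hc, by rw [dist_comm]; rw [hcd] at hx; exact hx⟩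
    rw [heq]
    exact isClosed_le (continuous_infDist_pt C) continuous_const
  have hMcl : IsClosed MAB := (hclosed A hAcomp hAne).inter (hclosed B hBcomp hBne)
  -- boundedness
  have hMbd : Bornology.IsBounded MAB := by
    have hsub : MAB ⊆ Metric.cthickening r A := by
      rintro x ⟨⟨a, ha, hax⟩, -⟩
      exact Metric.mem_cthickening_of_dist_le x a r A ha (by rwa [dist_comm])
    exact (hAbd.cthickening).subset hsub
  -- m-convexity
  have hMm : MConvexSet m MAB := by
    rintro x ⟨⟨a, ha, hax⟩, ⟨b, hb, hbx⟩⟩ y ⟨⟨a', ha', hay⟩, ⟨b', hb', hby⟩⟩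
    refine ⟨⟨m a a', hAm a ha a' ha', ?_⟩, ⟨m b b', hBm b hb b' hb', ?_⟩⟩
    · have := hconv.2 a x a' y; linarith
    · have := hconv.2 b x b' y; linarith
  -- Hausdorff distance bounds
  have hAM : hausdorffDist A MAB ≤ r := by
    apply hausdorffDist_le_of_infDist hr0
    · intro a ha
      obtain ⟨p, hp, hap⟩ := keyA a ha
      exact le_trans (infDist_le_dist_of_mem hp) hap
    · rintro x ⟨⟨a, ha, hax⟩, -⟩
      exact le_trans (infDist_le_dist_of_mem ha) (by rwa [dist_comm])
  have hBM : hausdorffDist B MAB ≤ r := by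
    apply hausdorffDist_le_of_infDist hr0
    · intro b hb
      obtain ⟨p, hp, hbp⟩ := keyB b hb
      exact le_trans (infDist_le_dist_of_mem hp) hbp
    · rintro x ⟨-, ⟨b, hb, hbx⟩⟩
      exact le_trans (infDist_le_dist_of_mem hb) (by rwa [dist_comm])
  have hAMfin : EMetric.hausdorffEdist A MAB ≠ ⊤ :=
    hausdorffEdist_ne_top_of_nonempty_of_bounded hAne hMne hAbd hMbd
  have hMBfin : EMetric.hausdorffEdist MAB B ≠ ⊤ :=
    hausdorffEdist_ne_top_of_nonempty_of_bounded hMne hBne hMbd hBbd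
  have tri : hausdorffDist A B ≤ hausdorffDist A MAB + hausdorffDist MAB B :=
    hausdorffDist_triangle hAMfin
  rw [hausdorffDist_comm (s := MAB) (t := B)] at tri
  have h2r : hausdorffDist A B = 2 * r := by rw [hrdef]; ring
  refine ⟨⟨hMne, hMcl, hMbd, hMm⟩, ?_, ?_⟩
  · linarith
  · linarith
end

section
/- Let (X,d) be a proper metric space and m : X×X → X a midpoint map for (X,d). Let 𝔉 denote the set of nonempty compact subsets of X, endowed with the Hausdorff metric d_H. Then the map 𝔐̃ : 𝔉 × 𝔉 → 𝔉 defined by 𝔐̃(A,B) := N_{d_H(A,B)/2}(A) ∩ N_{d_H(A,B)/2}(B) is a midpoint map for (𝔉, d_H); in particular 𝔐̃(A,B) is a nonempty compact subset of X and d_H(A, 𝔐̃(A,B)) = d_H(A,B)/2 = d_H(B, 𝔐̃(A,B)) for all A,B ∈ 𝔉. -/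
open Metric Set TopologicalSpace

variable {X : Type*}

/-
If `d = d_H(A, B)` and `a ∈ A`, compactness of `B` gives `b ∈ B` with `d(a, b) ≤ d`, and the
midpoint `m(a, b)` lies in `N_{d/2}(A) ∩ N_{d/2}(B)` at distance `≤ d/2` from `a`; conversely
every point of that intersection is within `d/2` of `A`. Hence `d_H(A, 𝔐̃(A, B)) ≤ d/2`, and
likewise for `B`; the triangle inequality `d ≤ d_H(A, 𝔐̃(A, B)) + d_H(𝔐̃(A, B), B)` forces both
to be equalities. Compactness of `𝔐̃(A, B)` comes from properness, as `N_r(A)` is the closed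
`r`-thickening of `A`.
-/

section

variable [MetricSpace X] {A B : Set X} {r : ℝ}

theorem infDist_le_of_mem_closedNbhd {x : X} (hx : x ∈ closedNbhd r A) : infDist x A ≤ r := by
  obtain ⟨a, ha, hax⟩ := hx
  exact (infDist_le_dist_of_mem ha).trans (dist_comm a x ▸ hax)

theorem IsCompact.closedNbhd_eq_cthickening (hA : IsCompact A) (hr : 0 ≤ r) :
    closedNbhd r A = cthickening r A := by
  rw [hA.cthickening_eq_biUnion_closedBall hr]
  ext x
  simp [closedNbhd, dist_comm]

theorem IsCompact.isBounded_closedNbhd (hA : IsCompact A) (hr : 0 ≤ r) :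
    Bornology.IsBounded (closedNbhd r A) :=
  hA.closedNbhd_eq_cthickening hr ▸ hA.isBounded.cthickening

theorem IsCompact.isCompact_closedNbhd [ProperSpace X] (hA : IsCompact A) (hr : 0 ≤ r) :
    IsCompact (closedNbhd r A) :=
  hA.closedNbhd_eq_cthickening hr ▸ hA.cthickening

theorem IsCompact.exists_dist_le_hausdorffDist {a : X} (ha : a ∈ A) (hA : Bornology.IsBounded A)
    (hB : IsCompact B) (hB' : B.Nonempty) : ∃ b ∈ B, dist a b ≤ hausdorffDist A B := by
  obtain ⟨b, hb, hab⟩ := hB.exists_infDist_eq_dist hB' a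
  refine ⟨b, hb, hab ▸ infDist_le_hausdorffDist_of_mem ha ?_⟩
  exact hausdorffEDist_ne_top_of_nonempty_of_bounded ⟨a, ha⟩ hB' hA hB.isBounded

namespace IsMidpointMap

variable {m : X → X → X} (hm : IsMidpointMap m) {a b : X}
include hm

theorem mem_closedNbhd_inter (ha : a ∈ A) (hb : b ∈ B) (hab : dist a b ≤ 2 * r) :
    m a b ∈ closedNbhd r A ∩ closedNbhd r B := by
  refine ⟨⟨a, ha, ?_⟩, ⟨b, hb, ?_⟩⟩
  · rw [dist_comm, (hm.2 a b).1]; linarith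
  · rw [dist_comm, (hm.2 a b).2]; linarith

theorem infDist_closedNbhd_inter_le (ha : a ∈ A) (hb : b ∈ B) (hab : dist a b ≤ 2 * r) :
    infDist a (closedNbhd r A ∩ closedNbhd r B) ≤ r := by
  refine (infDist_le_dist_of_mem (hm.mem_closedNbhd_inter ha hb hab)).trans ?_
  rw [dist_comm, (hm.2 a b).1]; linarith

theorem closedNbhd_inter_nonempty (hA : Bornology.IsBounded A) (hA' : A.Nonempty)
    (hB : IsCompact B) (hB' : B.Nonempty) (hr : hausdorffDist A B ≤ 2 * r) :
    (closedNbhd r A ∩ closedNbhd r B).Nonempty := by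
  obtain ⟨a, ha⟩ := hA'
  obtain ⟨b, hb, hab⟩ := hB.exists_dist_le_hausdorffDist ha hA hB'
  exact ⟨m a b, hm.mem_closedNbhd_inter ha hb (hab.trans hr)⟩

theorem hausdorffDist_closedNbhd_inter_le (hA : IsCompact A) (hB : IsCompact B)
    (hB' : B.Nonempty) (hr : hausdorffDist A B ≤ 2 * r) :
    hausdorffDist A (closedNbhd r A ∩ closedNbhd r B) ≤ r := by
  have hr₀ : 0 ≤ r := by linarith [hausdorffDist_nonneg (s := A) (t := B)]
  refine hausdorffDist_le_of_infDist hr₀ (fun a ha ↦ ?_) fun x hx ↦ infDist_le_of_mem_closedNbhd hx.1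
  obtain ⟨b, hb, hab⟩ := hB.exists_dist_le_hausdorffDist ha hA.isBounded hB'
  exact hm.infDist_closedNbhd_inter_le ha hb (hab.trans hr)

theorem hausdorffDist_closedNbhd_inter_eq (hA : IsCompact A) (hA' : A.Nonempty)
    (hB : IsCompact B) (hB' : B.Nonempty) (hr : hausdorffDist A B = 2 * r) :
    hausdorffDist A (closedNbhd r A ∩ closedNbhd r B) = r := by
  set M := closedNbhd r A ∩ closedNbhd r B
  have hr₀ : 0 ≤ r := by linarith [hausdorffDist_nonneg (s := A) (t := B)]
  have hAM : hausdorffDist A M ≤ r := hm.hausdorffDist_closedNbhd_inter_le hA hB hB' hr.le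
  have hBM : hausdorffDist B M ≤ r := by
    rw [show M = closedNbhd r B ∩ closedNbhd r A from inter_comm _ _]
    exact hm.hausdorffDist_closedNbhd_inter_le hB hA hA' (hausdorffDist_comm.trans hr).le
  have hM : M.Nonempty := hm.closedNbhd_inter_nonempty hA.isBounded hA' hB hB' hr.le
  have hM_bdd : Bornology.IsBounded M := (hA.isBounded_closedNbhd hr₀).subset inter_subset_left
  have htri := hausdorffDist_triangle (u := B)
    (hausdorffEDist_ne_top_of_nonempty_of_bounded hA' hM hA.isBounded hM_bdd)
  rw [hausdorffDist_comm (s := M)] at htri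
  linarith

end IsMidpointMap

end

/-- **Proposition 2.11.** For a midpoint map `m` on a proper metric space `(X,d)`,
the map `𝔐̃(A,B) := N_{d_H(A,B)/2}(A) ∩ N_{d_H(A,B)/2}(B)` is a midpoint map on the
set `𝔉(X,d)` of nonempty compact subsets of `X`, with respect to the Hausdorff
distance. -/
theorem frakMtilde_midpointMap_on_compacts [MetricSpace X] [ProperSpace X]
    (m : X → X → X) (hm : IsMidpointMap m) :
    ∀ A B : Set X, A.Nonempty → IsCompact A → B.Nonempty → IsCompact B →
      let MAB := closedNbhd (hausdorffDist A B / 2) A ∩ closedNbhd (hausdorffDist A B / 2) B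
      (MAB.Nonempty ∧ IsCompact MAB) ∧
      hausdorffDist A MAB = hausdorffDist A B / 2 ∧
      hausdorffDist B MAB = hausdorffDist A B / 2 := by
  intro A B hA' hA hB' hB
  have hr : hausdorffDist A B = 2 * (hausdorffDist A B / 2) := by ring
  have hr₀ : 0 ≤ hausdorffDist A B / 2 := div_nonneg hausdorffDist_nonneg zero_le_two
  refine ⟨⟨hm.closedNbhd_inter_nonempty hA.isBounded hA' hB hB' hr.le,
    (hA.isCompact_closedNbhd hr₀).inter_right (hB.isCompact_closedNbhd hr₀).isClosed⟩,
    hm.hausdorffDist_closedNbhd_inter_eq hA hA' hB hB' hr, ?_⟩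
  rw [inter_comm]
  exact hm.hausdorffDist_closedNbhd_inter_eq hB hB' hA hA' (hausdorffDist_comm.trans hr)
end

section
/- Let (X,d) be a uniquely geodesic, geodesically complete metric space in which geodesics do not split, and let I be a surjective isometry of the space C(X,d) of nonempty convex compact subsets of X endowed with the Hausdorff metric d_H. If there exists p ∈ X such that I({p}) is a singleton, then I({q}) is a singleton for every q ∈ X. -/
open Metric Set TopologicalSpace

variable {X : Type*}

/-!
The Hausdorff distance between two compact sets is attained at a point of one of them. So if
`d_H(A, C) = d_H(A, {x}) + d_H({x}, C)` with both summands positive, some `a ∈ A`, say, is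
`d_H(A, C)`-far from every point of `C`; every `c ∈ C` then lies beyond `x` on a geodesic from
`a`, at distance `d_H({x}, C)` from `x`, and since geodesics neither branch nor split, `C` is a
point. An isometry of `𝒞(X,d)` carries this configuration along.

Let `ψ` be the geodesic line with `ψ 0 = p`, `ψ d = q`, and `I{p} = {x}`. The dichotomy through
`{x}` shows that `I{q}` or `I{ψ(-1)} = {c}` is a point. In the second case let `φ` be the line
with `φ 0 = x`, `φ 1 = c`, and compare through `{ψ(-1)}` the preimages of `{φ(-(d+1))}` and of the
segment `φ([2,3])`. If the first is a point, it is `ψ(d+1)`, and `I{q}` is squeezed onto the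
geodesic from `x` to `φ(-(d+1))`, at distance `d` from `x`. If the second is a point, it is
`ψ(-3)`; then the dichotomy through `{x}` for `ψ(-3)` and `q` makes `I{q}` a point, since the
segment is not.
-/

section GeodesicGeometry

variable [MetricSpace X]

lemma IsUniquelyGeodesic.isGeodesicSpace (hug : IsUniquelyGeodesic X) : IsGeodesicSpace X :=
  fun x y => (hug x y).1

lemma IsGeodesicSegment.dist_left {γ : ℝ → X} {x y : X} (h : IsGeodesicSegment γ x y)
    {t : ℝ} (ht : t ∈ Icc 0 (dist x y)) : dist x (γ t) = t := by
  have := h.2.2 0 ⟨le_rfl, dist_nonneg⟩ t ht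
  rwa [h.1, zero_sub, abs_neg, abs_of_nonneg ht.1] at this

lemma IsGeodesicSegment.dist_right {γ : ℝ → X} {x y : X} (h : IsGeodesicSegment γ x y)
    {t : ℝ} (ht : t ∈ Icc 0 (dist x y)) : dist (γ t) y = dist x y - t := by
  have := h.2.2 t ht (dist x y) ⟨dist_nonneg, le_rfl⟩
  rwa [h.2.1, abs_of_nonpos (sub_nonpos.2 ht.2), neg_sub] at this

lemma isGeodesicSegment_of_dist_le {γ : ℝ → X} {a b : X} (h0 : γ 0 = a)
    (h1 : γ (dist a b) = b)
    (hle : ∀ s ∈ Icc 0 (dist a b), ∀ t ∈ Icc 0 (dist a b), s ≤ t → dist (γ s) (γ t) ≤ t - s) :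
    IsGeodesicSegment γ a b := by
  have heq : ∀ s ∈ Icc 0 (dist a b), ∀ t ∈ Icc 0 (dist a b), s ≤ t →
      dist (γ s) (γ t) = t - s := by
    intro s hs t ht hst
    have hL : (0 : ℝ) ≤ dist a b := hs.1.trans hs.2
    have h0s := hle 0 ⟨le_rfl, hL⟩ s hs hs.1
    have htL := hle t ht (dist a b) ⟨hL, le_rfl⟩ ht.2
    rw [h0] at h0s
    rw [h1] at htL
    linarith [hle s hs t ht hst, dist_triangle4 a (γ s) (γ t) b]
  refine ⟨h0, h1, fun s hs t ht => ?_⟩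
  rcases le_total s t with hst | hst
  · rw [heq s hs t ht hst, abs_of_nonpos (sub_nonpos.2 hst), neg_sub]
  · rw [dist_comm, heq t ht s hs hst, abs_of_nonneg (sub_nonneg.2 hst)]

lemma IsGeodesicSegment.concat {δ₁ δ₂ : ℝ → X} {a m b : X} (h₁ : IsGeodesicSegment δ₁ a m)
    (h₂ : IsGeodesicSegment δ₂ m b) (h : dist a m + dist m b = dist a b) :
    IsGeodesicSegment (fun t => if t ≤ dist a m then δ₁ t else δ₂ (t - dist a m)) a b := by
  have hα : 0 ≤ dist a m := dist_nonneg
  have hβ : 0 ≤ dist m b := dist_nonneg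
  apply isGeodesicSegment_of_dist_le
  · simp only [if_pos hα, h₁.1]
  · rcases hβ.eq_or_lt with hβ0 | hβpos
    · rw [← h, ← hβ0, add_zero, if_pos le_rfl, h₁.2.1, dist_eq_zero.1 hβ0.symm]
    · rw [if_neg (by linarith), ← h, add_sub_cancel_left, h₂.2.1]
  · rintro s ⟨hs0, hsL⟩ t ⟨ht0, htL⟩ hst
    rw [← h] at hsL htL
    split_ifs with hsα htα htα
    · rw [h₁.2.2 s ⟨hs0, hsα⟩ t ⟨ht0, htα⟩, abs_of_nonpos (by linarith), neg_sub]
    · calc dist (δ₁ s) (δ₂ (t - dist a m))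
          ≤ dist (δ₁ s) (δ₁ (dist a m)) + dist (δ₂ 0) (δ₂ (t - dist a m)) := by
            rw [h₁.2.1, h₂.1]; exact dist_triangle _ _ _
        _ = t - s := by
            rw [h₁.2.2 s ⟨hs0, hsα⟩ _ ⟨hα, le_rfl⟩,
              h₂.2.2 0 ⟨le_rfl, hβ⟩ _ ⟨by linarith, by linarith⟩,
              abs_of_nonpos (by linarith), abs_of_nonpos (by linarith)]
            ring
    · linarith
    · rw [h₂.2.2 _ ⟨by linarith, by linarith⟩ _ ⟨by linarith, by linarith⟩,
        abs_of_nonpos (by linarith)]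
      linarith

lemma IsUniquelyGeodesic.apply_dist_eq (hug : IsUniquelyGeodesic X) {a m b : X}
    (h : dist a m + dist m b = dist a b) {γ : ℝ → X} (hγ : IsGeodesicSegment γ a b) :
    γ (dist a m) = m := by
  obtain ⟨δ₁, h₁⟩ := (hug a m).1
  obtain ⟨δ₂, h₂⟩ := (hug m b).1
  rw [(hug a b).2 γ _ hγ (h₁.concat h₂ h) _
    ⟨dist_nonneg, h ▸ le_add_of_nonneg_right dist_nonneg⟩]
  simp only [le_rfl, if_true, h₁.2.1]

lemma IsUniquelyGeodesic.eq_of_dist_add_dist_eq (hug : IsUniquelyGeodesic X) {x z b b' : X}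
    (hb : dist x b + dist b z = dist x z) (hb' : dist x b' + dist b' z = dist x z)
    (h : dist x b = dist x b') : b = b' := by
  obtain ⟨γ, hγ⟩ := (hug x z).1
  rw [← hug.apply_dist_eq hb hγ, ← hug.apply_dist_eq hb' hγ, h]

lemma IsUniquelyGeodesic.image_subset_of_dist_add_dist_eq (hug : IsUniquelyGeodesic X)
    {a x y : X} (h : dist a x + dist x y = dist a y) {σ γ : ℝ → X}
    (hσ : IsGeodesicSegment σ a x) (hγ : IsGeodesicSegment γ a y) :
    σ '' Icc 0 (dist a x) ⊆ γ '' Icc 0 (dist a y) := by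
  have hsub : Icc 0 (dist a x) ⊆ Icc 0 (dist a y) :=
    Icc_subset_Icc_right (by linarith [dist_nonneg (x := x) (y := y)])
  have hγx : IsGeodesicSegment γ a x :=
    ⟨hγ.1, hug.apply_dist_eq h hγ, fun s hs t ht => hγ.2.2 s (hsub hs) t (hsub ht)⟩
  rintro _ ⟨t, ht, rfl⟩
  exact ⟨t, hsub ht, ((hug a x).2 σ γ hσ hγx t ht).symm⟩

lemma exists_isometry_of_dist_add_dist_eq (hug : IsUniquelyGeodesic X)
    (hgc : IsGeodesicallyComplete X) {a x y : X} (h : dist a x + dist x y = dist a y)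
    {σ : ℝ → X} (hσ : IsGeodesicSegment σ a x) :
    ∃ ℓ : ℝ → X, Isometry ℓ ∧ σ '' Icc 0 (dist a x) ⊆ range ℓ ∧ y ∈ range ℓ := by
  obtain ⟨γ, hγ⟩ := (hug a y).1
  obtain ⟨ℓ, hℓ, hsub⟩ := hgc a y γ hγ
  exact ⟨ℓ, hℓ, (hug.image_subset_of_dist_add_dist_eq h hσ hγ).trans hsub,
    hsub ⟨dist a y, ⟨dist_nonneg, le_rfl⟩, hγ.2.1⟩⟩

lemma eq_of_abs_sub_add_abs_sub_eq {a x y₁ y₂ : ℝ} (hax : a ≠ x)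
    (h₁ : |a - x| + |x - y₁| = |a - y₁|) (h₂ : |a - x| + |x - y₂| = |a - y₂|)
    (h : |x - y₁| = |x - y₂|) : y₁ = y₂ := by
  rcases hax.lt_or_gt with hlt | hlt <;>
  rcases abs_cases (a - x) with ⟨e, _⟩ | ⟨e, _⟩ <;>
  rcases abs_cases (x - y₁) with ⟨e₁, _⟩ | ⟨e₁, _⟩ <;>
  rcases abs_cases (x - y₂) with ⟨e₂, _⟩ | ⟨e₂, _⟩ <;>
  rcases abs_cases (a - y₁) with ⟨f₁, _⟩ | ⟨f₁, _⟩ <;>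
  rcases abs_cases (a - y₂) with ⟨f₂, _⟩ | ⟨f₂, _⟩ <;>
  linarith

lemma GeodesicsDoNotSplit.eq_of_dist_add_dist_eq (hns : GeodesicsDoNotSplit X)
    (hug : IsUniquelyGeodesic X) (hgc : IsGeodesicallyComplete X) {a x y₁ y₂ : X} (hax : a ≠ x)
    (h₁ : dist a x + dist x y₁ = dist a y₁) (h₂ : dist a x + dist x y₂ = dist a y₂)
    (h : dist x y₁ = dist x y₂) : y₁ = y₂ := by
  obtain ⟨σ, hσ⟩ := (hug a x).1
  obtain ⟨ℓ, hℓ, hσℓ, hy₁⟩ := exists_isometry_of_dist_add_dist_eq hug hgc h₁ hσ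
  obtain ⟨ℓ₂, hℓ₂, hσℓ₂, hy₂⟩ := exists_isometry_of_dist_add_dist_eq hug hgc h₂ hσ
  rw [hns a x σ hσ hax ℓ₂ ℓ hℓ₂ hℓ hσℓ₂ hσℓ] at hy₂
  obtain ⟨ta, rfl⟩ : a ∈ range ℓ := hσℓ ⟨0, ⟨le_rfl, dist_nonneg⟩, hσ.1⟩
  obtain ⟨tx, rfl⟩ : x ∈ range ℓ := hσℓ ⟨_, ⟨dist_nonneg, le_rfl⟩, hσ.2.1⟩
  obtain ⟨t₁, rfl⟩ := hy₁
  obtain ⟨t₂, rfl⟩ := hy₂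
  simp only [hℓ.dist_eq, Real.dist_eq] at h₁ h₂ h
  rw [eq_of_abs_sub_add_abs_sub_eq (fun hta => hax (congrArg ℓ hta)) h₁ h₂ h]

lemma IsGeodesicallyComplete.exists_isometry (hgc : IsGeodesicallyComplete X)
    (hg : IsGeodesicSpace X) (p q : X) :
    ∃ ψ : ℝ → X, Isometry ψ ∧ ψ 0 = p ∧ ψ (dist p q) = q := by
  obtain ⟨γ, hγ⟩ := hg p q
  obtain ⟨ℓ, hℓ, hsub⟩ := hgc p q γ hγ
  obtain ⟨t₀, hp⟩ := hsub ⟨0, ⟨le_rfl, dist_nonneg⟩, hγ.1⟩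
  obtain ⟨t₁, hq⟩ := hsub ⟨_, ⟨dist_nonneg, le_rfl⟩, hγ.2.1⟩
  have hd : dist p q = |t₁ - t₀| := by rw [← hp, ← hq, hℓ.dist_eq, Real.dist_eq, abs_sub_comm]
  rcases le_total t₀ t₁ with ht | ht
  · refine ⟨fun t => ℓ (t₀ + t), hℓ.comp (isometry_add_left t₀), by simpa using hp, ?_⟩
    show ℓ (t₀ + dist p q) = q
    rw [hd, abs_of_nonneg (sub_nonneg.2 ht), add_sub_cancel, hq]
  · refine ⟨fun t => ℓ (t₀ - t), hℓ.comp (IsometryEquiv.subLeft t₀).isometry,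
      by simpa using hp, ?_⟩
    show ℓ (t₀ - dist p q) = q
    rw [hd, abs_of_nonpos (sub_nonpos.2 ht), neg_sub, sub_sub_cancel, hq]

lemma isGeodConvex_of_dist_add_dist_eq {S : Set X}
    (hS : ∀ a ∈ S, ∀ b ∈ S, ∀ w, dist a w + dist w b = dist a b → w ∈ S) : IsGeodConvex S := by
  rintro a ha b hb γ hγ _ ⟨t, ht, rfl⟩
  exact hS a ha b hb _ (by rw [hγ.dist_left ht, hγ.dist_right ht, add_sub_cancel])

lemma IsUniquelyGeodesic.isGeodConvex_image_Icc (hug : IsUniquelyGeodesic X) {φ : ℝ → X}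
    (hφ : Isometry φ) (c e : ℝ) : IsGeodConvex (φ '' Icc c e) := by
  have hdist (s t : ℝ) : dist (φ s) (φ t) = |s - t| := by rw [hφ.dist_eq, Real.dist_eq]
  refine isGeodConvex_of_dist_add_dist_eq ?_
  rintro _ ⟨r, hr, rfl⟩ _ ⟨r', hr', rfl⟩ w hw
  wlog hrr : r ≤ r' generalizing r r'
  · refine this r' hr' r hr ?_ (le_of_not_ge hrr)
    rwa [dist_comm, add_comm, dist_comm w, dist_comm (φ r')]
  have hrr' : dist (φ r) (φ r') = r' - r := by
    rw [hdist, abs_of_nonpos (sub_nonpos.2 hrr), neg_sub]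
  set t := dist (φ r) w
  have ht : 0 ≤ t := dist_nonneg
  have htr : t ≤ r' - r := by linarith [dist_nonneg (x := w) (y := φ r')]
  have hw' : w = φ (r + t) := by
    have h₁ : dist (φ r) (φ (r + t)) = t := by
      rw [hdist, sub_add_cancel_left, abs_neg, abs_of_nonneg ht]
    have h₂ : dist (φ (r + t)) (φ r') = r' - r - t := by
      rw [hdist, abs_of_nonpos (by linarith)]
      ring
    exact hug.eq_of_dist_add_dist_eq hw (by rw [h₁, h₂, hrr']; ring) h₁.symm
  exact ⟨r + t, ⟨by linarith [hr.1], by linarith [hr'.2]⟩, hw'.symm⟩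

end GeodesicGeometry

section HausdorffDichotomy

variable [MetricSpace X]

lemma dist_le_hausdorffDist_singleton {A : Set X} (hA : Bornology.IsBounded A) (x : X) {a : X}
    (ha : a ∈ A) : dist x a ≤ hausdorffDist {x} A := by
  have := infDist_le_hausdorffDist_of_mem ha <|
    hausdorffEDist_ne_top_of_nonempty_of_bounded ⟨a, ha⟩ (singleton_nonempty x) hA
      Bornology.isBounded_singleton
  rwa [infDist_singleton, hausdorffDist_comm, dist_comm] at this

lemma IsCompact.exists_hausdorffDist_le_infDist {A C : Set X} (hA : IsCompact A)
    (hA' : A.Nonempty) (hC : IsCompact C) (hC' : C.Nonempty) :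
    (∃ a ∈ A, hausdorffDist A C ≤ infDist a C) ∨ ∃ c ∈ C, hausdorffDist A C ≤ infDist c A := by
  obtain ⟨a, ha, hamax⟩ := hA.exists_isMaxOn hA' (continuous_infDist_pt C).continuousOn
  obtain ⟨c, hc, hcmax⟩ := hC.exists_isMaxOn hC' (continuous_infDist_pt A).continuousOn
  have hle : hausdorffDist A C ≤ max (infDist a C) (infDist c A) :=
    hausdorffDist_le_of_infDist (le_max_of_le_left infDist_nonneg)
      (fun a' ha' => (hamax ha').trans (le_max_left _ _))
      (fun c' hc' => (hcmax hc').trans (le_max_right _ _))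
  rcases le_max_iff.1 hle with h | h
  exacts [.inl ⟨a, ha, h⟩, .inr ⟨c, hc, h⟩]

lemma GeodesicsDoNotSplit.subsingleton_of_forall_dist_le (hns : GeodesicsDoNotSplit X)
    (hug : IsUniquelyGeodesic X) (hgc : IsGeodesicallyComplete X) {a x : X} {β : ℝ}
    {C : Set X} (hax : a ≠ x) (hC : ∀ c ∈ C, dist x c ≤ β)
    (hfar : ∀ c ∈ C, dist a x + β ≤ dist a c) : C.Subsingleton := by
  have hpin : ∀ c ∈ C, dist x c = β ∧ dist a x + dist x c = dist a c := fun c hc => by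
    have := dist_triangle a x c
    have := hC c hc
    have := hfar c hc
    constructor <;> linarith
  intro c hc c' hc'
  exact hns.eq_of_dist_add_dist_eq hug hgc hax (hpin c hc).2 (hpin c' hc').2
    ((hpin c hc).1.trans (hpin c' hc').1.symm)

lemma GeodesicsDoNotSplit.subsingleton_of_hausdorffDist_le_infDist
    (hns : GeodesicsDoNotSplit X) (hug : IsUniquelyGeodesic X) (hgc : IsGeodesicallyComplete X)
    {A C : Set X} {x a : X} (hA : Bornology.IsBounded A) (hC : Bornology.IsBounded C)
    (ha : a ∈ A) (hpos : 0 < hausdorffDist A {x})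
    (hsum : hausdorffDist A C = hausdorffDist A {x} + hausdorffDist {x} C)
    (hfar : hausdorffDist A C ≤ infDist a C) : C.Subsingleton := by
  rcases C.eq_empty_or_nonempty with rfl | ⟨c, hc⟩
  · exact subsingleton_empty
  have hax : dist a x ≤ hausdorffDist A {x} := by
    rw [dist_comm, hausdorffDist_comm]
    exact dist_le_hausdorffDist_singleton hA x ha
  refine hns.subsingleton_of_forall_dist_le hug hgc ?_
    (fun c hc => dist_le_hausdorffDist_singleton hC x hc)
    (fun c hc => by linarith [infDist_le_dist_of_mem hc (x := a)])
  rintro rfl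
  linarith [infDist_le_dist_of_mem hc (x := a), dist_le_hausdorffDist_singleton hC a hc]

lemma GeodesicsDoNotSplit.subsingleton_or_subsingleton_of_hausdorffDist_eq_add
    (hns : GeodesicsDoNotSplit X) (hug : IsUniquelyGeodesic X) (hgc : IsGeodesicallyComplete X)
    {A C : Set X} {x : X} (hA : IsCompact A) (hA' : A.Nonempty) (hC : IsCompact C)
    (hC' : C.Nonempty) (hα : 0 < hausdorffDist A {x}) (hβ : 0 < hausdorffDist {x} C)
    (hsum : hausdorffDist A C = hausdorffDist A {x} + hausdorffDist {x} C) :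
    A.Subsingleton ∨ C.Subsingleton := by
  rcases hA.exists_hausdorffDist_le_infDist hA' hC hC' with ⟨a, ha, hfar⟩ | ⟨c, hc, hfar⟩
  · exact .inr <| hns.subsingleton_of_hausdorffDist_le_infDist hug hgc hA.isBounded
      hC.isBounded ha hα hsum hfar
  · refine .inl <| hns.subsingleton_of_hausdorffDist_le_infDist hug hgc hC.isBounded
      hA.isBounded hc (by rwa [hausdorffDist_comm]) ?_ (by rwa [hausdorffDist_comm])
    linarith [hausdorffDist_comm (s := A) (t := C), hausdorffDist_comm (s := A) (t := {x}),
      hausdorffDist_comm (s := C) (t := {x})]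

lemma IsUniquelyGeodesic.subsingleton_of_hausdorffDist_add_eq (hug : IsUniquelyGeodesic X)
    {B : Set X} (hB : Bornology.IsBounded B) {x w : X}
    (h : hausdorffDist {x} B + hausdorffDist B {w} = dist x w) : B.Subsingleton := by
  have hpin : ∀ b ∈ B, dist x b = hausdorffDist {x} B ∧ dist x b + dist b w = dist x w :=
    fun b hb => by
      have h₁ := dist_le_hausdorffDist_singleton hB x hb
      have h₂ := dist_le_hausdorffDist_singleton hB w hb
      rw [hausdorffDist_comm, dist_comm] at h₂
      have := dist_triangle x b w
      constructor <;> linarith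
  intro b hb b' hb'
  exact hug.eq_of_dist_add_dist_eq (hpin b hb).2 (hpin b' hb').2
    ((hpin b hb).1.trans (hpin b' hb').1.symm)

end HausdorffDichotomy

namespace ConvexCompacts

variable [MetricSpace X]

lemma dist_singletonCC (u v : X) : dist (singletonCC u) (singletonCC v) = dist u v :=
  hausdorffDist_singleton

lemma exists_eq_singletonCC {A : ConvexCompacts X} (h : (A.1 : Set X).Subsingleton) :
    ∃ a, A = singletonCC a := by
  obtain ⟨a, ha⟩ := A.1.nonempty
  exact ⟨a, Subtype.ext (NonemptyCompacts.ext (h.eq_singleton_of_mem ha))⟩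

lemma exists_eq_singletonCC_or_of_dist_eq_add (hug : IsUniquelyGeodesic X)
    (hgc : IsGeodesicallyComplete X) (hns : GeodesicsDoNotSplit X) {A C : ConvexCompacts X}
    {x : X} (hA : 0 < dist A (singletonCC x)) (hC : 0 < dist (singletonCC x) C)
    (h : dist A C = dist A (singletonCC x) + dist (singletonCC x) C) :
    (∃ a, A = singletonCC a) ∨ ∃ c, C = singletonCC c :=
  (hns.subsingleton_or_subsingleton_of_hausdorffDist_eq_add hug hgc A.1.isCompact A.1.nonempty
    C.1.isCompact C.1.nonempty hA hC h).imp exists_eq_singletonCC exists_eq_singletonCC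

lemma exists_eq_singletonCC_of_dist_add_dist_eq (hug : IsUniquelyGeodesic X)
    {B : ConvexCompacts X} {x w : X}
    (h : dist (singletonCC x) B + dist B (singletonCC w) = dist x w) :
    ∃ b, B = singletonCC b :=
  exists_eq_singletonCC (hug.subsingleton_of_hausdorffDist_add_eq B.1.isCompact.isBounded h)

def lineSegment (hug : IsUniquelyGeodesic X) {φ : ℝ → X} (hφ : Isometry φ) {s t : ℝ}
    (hst : s ≤ t) : ConvexCompacts X :=
  ⟨⟨⟨φ '' Icc s t, isCompact_Icc.image hφ.continuous⟩, (nonempty_Icc.2 hst).image φ⟩,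
    hug.isGeodConvex_image_Icc hφ s t⟩

lemma dist_singletonCC_lineSegment (hug : IsUniquelyGeodesic X) {φ : ℝ → X}
    (hφ : Isometry φ) {r s t : ℝ} (hrs : r ≤ s) (hst : s ≤ t) :
    dist (singletonCC (φ r)) (lineSegment hug hφ hst) = t - r := by
  have hdist (u : ℝ) (hu : u ∈ Icc s t) : dist (φ r) (φ u) = u - r := by
    rw [hφ.dist_eq, Real.dist_eq, abs_of_nonpos (by linarith [hu.1]), neg_sub]
  have ht : t ∈ Icc s t := ⟨hst, le_rfl⟩
  refine le_antisymm ?_ ?_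
  · refine hausdorffDist_le_of_mem_dist (by linarith) ?_ ?_
    · rintro _ rfl
      exact ⟨φ t, mem_image_of_mem φ ht, (hdist t ht).le⟩
    · rintro _ ⟨u, hu, rfl⟩
      exact ⟨φ r, rfl, by rw [dist_comm, hdist u hu]; linarith [hu.2]⟩
  · rw [← hdist t ht]
    exact dist_le_hausdorffDist_singleton (isCompact_Icc.image hφ.continuous).isBounded _
      (mem_image_of_mem φ ht)

lemma lineSegment_ne_singletonCC (hug : IsUniquelyGeodesic X) {φ : ℝ → X} (hφ : Isometry φ)
    {s t : ℝ} (hst : s < t) (a : X) : lineSegment hug hφ hst.le ≠ singletonCC a := by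
  intro h
  have hseg : φ '' Icc s t = {a} := congrArg (fun A : ConvexCompacts X => (A.1 : Set X)) h
  have hs : φ s = a := hseg.subset (mem_image_of_mem φ ⟨le_rfl, hst.le⟩)
  have ht : φ t = a := hseg.subset (mem_image_of_mem φ ⟨hst.le, le_rfl⟩)
  exact hst.ne (hφ.injective (hs.trans ht.symm))

end ConvexCompacts

section Isometries

variable [MetricSpace X]

open ConvexCompacts

lemma Isometry.eq_of_dist_eq {ψ : ℝ → X} (hψ : Isometry ψ) (hns : GeodesicsDoNotSplit X)
    (hug : IsUniquelyGeodesic X) (hgc : IsGeodesicallyComplete X) {s t r : ℝ} {z : X}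
    (hst : s ≠ t) (hbtw : |t - s| + |r - t| = |r - s|) (hs : dist (ψ s) z = |r - s|)
    (ht : dist (ψ t) z = |r - t|) : z = ψ r := by
  have hdist (u v : ℝ) : dist (ψ u) (ψ v) = |v - u| := by
    rw [hψ.dist_eq, Real.dist_eq, abs_sub_comm]
  exact hns.eq_of_dist_add_dist_eq hug hgc (hψ.injective.ne hst)
    (by rw [hs, ht, hdist]; exact hbtw) (by rw [hdist, hdist, hdist]; exact hbtw)
    (by rw [ht, hdist])

lemma IsometryEquiv.exists_singletonCC_or (hug : IsUniquelyGeodesic X)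
    (hgc : IsGeodesicallyComplete X) (hns : GeodesicsDoNotSplit X)
    (I : ConvexCompacts X ≃ᵢ ConvexCompacts X) {p u v x : X}
    (hp : I (singletonCC p) = singletonCC x) (hup : u ≠ p) (hpv : p ≠ v)
    (h : dist u p + dist p v = dist u v) :
    (∃ a, I (singletonCC u) = singletonCC a) ∨ ∃ b, I (singletonCC v) = singletonCC b := by
  refine exists_eq_singletonCC_or_of_dist_eq_add hug hgc hns (x := x) ?_ ?_ ?_ <;>
    simp only [← hp, I.dist_eq, dist_singletonCC]
  exacts [dist_pos.2 hup, dist_pos.2 hpv, h.symm]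

lemma IsometryEquiv.eq_of_dist_singletonCC (hug : IsUniquelyGeodesic X)
    (hgc : IsGeodesicallyComplete X) (hns : GeodesicsDoNotSplit X)
    (I : ConvexCompacts X ≃ᵢ ConvexCompacts X) {ψ : ℝ → X} (hψ : Isometry ψ) {x c z : X}
    {r : ℝ} (hx : I (singletonCC (ψ 0)) = singletonCC x)
    (hc : I (singletonCC (ψ (-1))) = singletonCC c) (hr : 0 ≤ r ∨ r ≤ -1)
    (h₀ : dist (singletonCC x) (I (singletonCC z)) = |r|)
    (h₁ : dist (singletonCC c) (I (singletonCC z)) = |r + 1|) : z = ψ r := by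
  rw [← hx, I.dist_eq, dist_singletonCC, ← sub_zero r] at h₀
  rw [← hc, I.dist_eq, dist_singletonCC, ← sub_neg_eq_add] at h₁
  rcases hr with hr | hr
  · refine hψ.eq_of_dist_eq hns hug hgc (by norm_num) ?_ h₁ h₀
    rw [abs_of_nonneg (by norm_num), abs_of_nonneg (by linarith), abs_of_nonneg (by linarith)]
    ring
  · refine hψ.eq_of_dist_eq hns hug hgc (by norm_num) ?_ h₀ h₁
    rw [abs_of_nonpos (by norm_num), abs_of_nonpos (by linarith), abs_of_nonpos (by linarith)]
    ring

lemma IsometryEquiv.exists_singletonCC_of_apply_zero_of_apply_neg_one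
    (hug : IsUniquelyGeodesic X) (hgc : IsGeodesicallyComplete X) (hns : GeodesicsDoNotSplit X)
    (I : ConvexCompacts X ≃ᵢ ConvexCompacts X) {ψ : ℝ → X} (hψ : Isometry ψ) {d : ℝ}
    (hd : 0 < d) {x c : X} (hx : I (singletonCC (ψ 0)) = singletonCC x)
    (hc : I (singletonCC (ψ (-1))) = singletonCC c) :
    ∃ y, I (singletonCC (ψ d)) = singletonCC y := by
  have hψd (s t : ℝ) : dist (I (singletonCC (ψ s))) (I (singletonCC (ψ t))) = |s - t| := by
    rw [I.dist_eq, dist_singletonCC, hψ.dist_eq, Real.dist_eq]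
  obtain ⟨φ, hφ, rfl, hφc⟩ := hgc.exists_isometry hug.isGeodesicSpace x c
  rw [show dist (φ 0) c = 1 by rw [← dist_singletonCC, ← hx, ← hc, hψd]; norm_num] at hφc
  subst hφc
  have hφd (s t : ℝ) : dist (singletonCC (φ s)) (singletonCC (φ t)) = |s - t| := by
    rw [dist_singletonCC, hφ.dist_eq, Real.dist_eq]
  have hW (r : ℝ) (hr : r ≤ 2) :
      dist (singletonCC (φ r)) (lineSegment hug hφ (by norm_num : (2 : ℝ) ≤ 3)) = 3 - r :=
    dist_singletonCC_lineSegment hug hφ hr _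
  have hc' : I.symm (singletonCC (φ 1)) = singletonCC (ψ (-1)) := I.symm_apply_eq.2 hc.symm
  rcases exists_eq_singletonCC_or_of_dist_eq_add hug hgc hns (x := ψ (-1))
      (A := I.symm (singletonCC (φ (-(d + 1)))))
      (C := I.symm (lineSegment hug hφ (by norm_num : (2 : ℝ) ≤ 3)))
      (by rw [← hc', I.symm.dist_eq, hφd, abs_of_neg (by linarith)]; linarith)
      (by rw [← hc', I.symm.dist_eq, hW 1 (by norm_num)]; norm_num)
      (by rw [← hc', I.symm.dist_eq, I.symm.dist_eq, I.symm.dist_eq, hφd, hW 1 (by norm_num),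
            hW _ (by linarith), abs_of_neg (by linarith)]
          ring)
    with ⟨z, hz⟩ | ⟨z, hz⟩
  · rw [I.symm_apply_eq] at hz
    obtain rfl : z = ψ (d + 1) :=
      I.eq_of_dist_singletonCC hug hgc hns hψ hx hc (.inl (by linarith))
        (by rw [← hz, hφd]; ring_nf) (by rw [← hz, hφd]; ring_nf)
    refine exists_eq_singletonCC_of_dist_add_dist_eq hug (x := φ 0) (w := φ (-(d + 1))) ?_
    rw [← hx, hz, hψd, hψd, ← dist_singletonCC, hφd, abs_of_neg (by linarith),
      abs_of_neg (by linarith), abs_of_pos (by linarith)]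
    ring
  · rw [I.symm_apply_eq] at hz
    obtain rfl : z = ψ (-3) :=
      I.eq_of_dist_singletonCC hug hgc hns hψ hx hc (.inr (by norm_num))
        (by rw [← hz, hW 0 (by norm_num)]; norm_num) (by rw [← hz, hW 1 (by norm_num)]; norm_num)
    rcases I.exists_singletonCC_or hug hgc hns hx (hψ.injective.ne (by norm_num : (-3 : ℝ) ≠ 0))
        (hψ.injective.ne hd.ne) (by
          simp only [hψ.dist_eq, Real.dist_eq]
          rw [abs_of_neg (by norm_num), abs_of_neg (by linarith), abs_of_neg (by linarith)]
          ring)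
      with ⟨a, ha⟩ | hq
    · exact absurd (hz.trans ha) (lineSegment_ne_singletonCC hug hφ (by norm_num) a)
    · exact hq

end Isometries

/-- **Lemma 3.2.** If a surjective isometry of `𝒞(X,d)` maps some singleton to a
singleton, then it maps every singleton to a singleton. -/
theorem image_of_points_are_points_of_one [MetricSpace X]
    (hug : IsUniquelyGeodesic X) (hgc : IsGeodesicallyComplete X)
    (hns : GeodesicsDoNotSplit X)
    (I : ConvexCompacts X ≃ᵢ ConvexCompacts X)
    (h : ∃ p x : X, ((I (singletonCC p)).1 : Set X) = {x}) :
    ∀ q : X, ∃ x : X, ((I (singletonCC q)).1 : Set X) = {x} := by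
  obtain ⟨p, x, hpx⟩ := h
  have hp : I (singletonCC p) = singletonCC x := Subtype.ext (NonemptyCompacts.ext hpx)
  intro q
  suffices ∃ y, I (singletonCC q) = singletonCC y from this.imp fun y hy => by rw [hy]; rfl
  rcases eq_or_ne p q with rfl | hpq
  · exact ⟨x, hp⟩
  obtain ⟨ψ, hψ, rfl, hψq⟩ := hgc.exists_isometry hug.isGeodesicSpace p q
  set d := dist (ψ 0) q
  have hd : 0 < d := dist_pos.2 hpq
  rw [← hψq]
  rcases I.exists_singletonCC_or hug hgc hns hp (u := ψ d) (v := ψ (-1))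
      (hψ.injective.ne hd.ne') (hψ.injective.ne (by norm_num)) (by
        simp only [hψ.dist_eq, Real.dist_eq]
        rw [abs_of_pos (by linarith), abs_of_pos (by linarith), abs_of_pos (by linarith)]
        ring) with hq | ⟨c, hc⟩
  · exact hq
  · exact I.exists_singletonCC_of_apply_zero_of_apply_neg_one hug hgc hns hψ hd hp hc
end
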